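/- arXiv:1109.0652 — 11 statements merged into one kernel-verified Lean document; each statement's English description precedes it below -/
import Mathlib

section
/- Let K be a field and d, n > 1 integers, N = binom(d+n-1, d). If t_0, t_1, …, t_d are nonzero vectors of K^n spanning pairwise distinct 1-dimensional subspaces (so that ⟨v_d(t_0)⟩, …, ⟨v_d(t_d)⟩ are d+1 distinct Veronesean points of degree d), then the vectors v_d(t_0), …, v_d(t_d) are linearly independent in K^N; equivalently, any d+1 distinct Veronesean points of degree d span a subspace of vector dimension d+1. -/
/-- Index type for `K^N`, `N = (d+n-1).choose d`: sequences `α` of `n`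
nonnegative integers summing to `d`. -/
def VIdx (n d : ℕ) : Type := {α : Fin n → ℕ // ∑ i, α i = d}

/-- The (vector) Veronese map `v_d : K^n → K^N`, sending `t` to `(t^α)_α`. -/
def vero (K : Type*) [Field K] (n d : ℕ) (t : Fin n → K) : VIdx n d → K :=
  fun α => ∏ i, t i ^ α.1 i

/-- If `u, v` are nonzero with distinct spans, some `2×2` minor is nonzero. -/
lemma vero_aux_minor (K : Type*) [Field K] (n : ℕ) (u v : Fin n → K)
    (hu : u ≠ 0) (hv : v ≠ 0)
    (h : Submodule.span K {u} ≠ Submodule.span K {v}) :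
    ∃ a b, v b * u a - v a * u b ≠ 0 := by
  by_contra hc
  push_neg at hc
  obtain ⟨b, hb⟩ : ∃ b, v b ≠ 0 := by
    by_contra hb; push_neg at hb; exact hv (funext hb)
  apply h
  have hc' : u = (u b / v b) • v := by
    funext a
    have := hc a b
    rw [Pi.smul_apply, smul_eq_mul, div_mul_eq_mul_div, eq_div_iff hb]
    linear_combination this
  have hcne : u b / v b ≠ 0 := by
    intro h0
    rw [h0, zero_smul] at hc'
    exact hu hc'
  rw [hc', Submodule.span_singleton_smul_eq (IsUnit.mk0 _ hcne) v]

/-- Any `d+1` distinct Veronesean points of degree `d` are independent. -/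
theorem veronesean_point_independence (K : Type*) [Field K] (d n : ℕ)
    (hd : 1 < d) (hn : 1 < n) (t : Fin (d + 1) → (Fin n → K))
    (ht0 : ∀ i, t i ≠ 0)
    (htd : ∀ i j, i ≠ j →
      Submodule.span K {t i} ≠ Submodule.span K {t j}) :
    LinearIndependent K (fun i => vero K n d (t i)) := by
  classical
  -- for each pair i ≠ j, choose a linear form vanishing at t j but not t i
  have hsel : ∀ i j : Fin (d + 1), i ≠ j →
      ∃ a b, t j b * t i a - t j a * t i b ≠ 0 :=
    fun i j hij => vero_aux_minor K n (t i) (t j) (ht0 i) (ht0 j) (htd i j hij)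
  rw [Fintype.linearIndependent_iff]
  intro g hg i
  -- the linear relation, evaluated coordinatewise
  have hα : ∀ α : VIdx n d, ∑ j, g j * vero K n d (t j) α = 0 := by
    intro α
    have := congrFun hg α
    simpa [Finset.sum_apply] using this
  -- build the polynomial
  set s : Finset (Fin (d + 1)) := Finset.univ.erase i with hs
  have hcard : s.card = d := by
    simp [hs, Finset.card_erase_of_mem]
  choose a b hab using fun j (hj : j ∈ s) =>
    hsel i j (fun h => (Finset.mem_erase.mp hj).1 h.symm)
  open MvPolynomial in
  set P : (j : Fin (d+1)) → j ∈ s → MvPolynomial (Fin n) K :=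
    fun j hj => C (t j (b j hj)) * X (a j hj) - C (t j (a j hj)) * X (b j hj)
    with hP
  open MvPolynomial in
  set Q : MvPolynomial (Fin n) K := ∏ j ∈ s.attach, P j.1 j.2 with hQ
  have hPeval : ∀ (j : Fin (d+1)) (hj : j ∈ s) (x : Fin n → K),
      MvPolynomial.eval x (P j hj)
        = t j (b j hj) * x (a j hj) - t j (a j hj) * x (b j hj) := by
    intro j hj x; simp [hP]
  have hQhom : Q.IsHomogeneous d := by
    rw [hQ]
    have := MvPolynomial.IsHomogeneous.prod s.attach (fun j => P j.1 j.2)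
      (fun _ => 1) (fun j _ =>
        (MvPolynomial.isHomogeneous_C_mul_X _ _).sub
          (MvPolynomial.isHomogeneous_C_mul_X _ _))
    simpa [Finset.card_attach, hcard] using this
  -- Q vanishes at t j for j ≠ i
  have hQzero : ∀ j ∈ s, MvPolynomial.eval (t j) Q = 0 := by
    intro j hj
    rw [hQ, MvPolynomial.eval_prod]
    apply Finset.prod_eq_zero (Finset.mem_attach s ⟨j, hj⟩)
    rw [hPeval]; ring
  -- Q does not vanish at t i
  have hQne : MvPolynomial.eval (t i) Q ≠ 0 := by
    rw [hQ, MvPolynomial.eval_prod]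
    apply Finset.prod_ne_zero_iff.mpr
    intro j _
    rw [hPeval]
    exact hab j.1 j.2
  -- pair the relation with Q
  have key : ∑ j, g j * MvPolynomial.eval (t j) Q = 0 := by
    have expand : ∀ j, MvPolynomial.eval (t j) Q
        = ∑ m ∈ Q.support, MvPolynomial.coeff m Q * ∏ k, t j k ^ m k :=
      fun j => MvPolynomial.eval_eq' (t j) Q
    calc ∑ j, g j * MvPolynomial.eval (t j) Q
        = ∑ j, ∑ m ∈ Q.support,
            MvPolynomial.coeff m Q * (g j * ∏ k, t j k ^ m k) := by
          refine Finset.sum_congr rfl fun j _ => ?_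
          rw [expand j, Finset.mul_sum]
          exact Finset.sum_congr rfl fun m _ => by ring
      _ = ∑ m ∈ Q.support,
            MvPolynomial.coeff m Q * ∑ j, g j * ∏ k, t j k ^ m k := by
          rw [Finset.sum_comm]
          exact Finset.sum_congr rfl fun m _ => by rw [Finset.mul_sum]
      _ = 0 := by
          apply Finset.sum_eq_zero
          intro m hm
          have hdeg : ∑ k, (m : Fin n →₀ ℕ) k = d := by
            have h1 := hQhom (MvPolynomial.mem_support_iff.mp hm)
            rw [← h1, Finsupp.weight_apply, Finsupp.sum]
            rw [← Finset.sum_subset (Finset.subset_univ (m : Fin n →₀ ℕ).support)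
                (fun k _ hk => by simp [Finsupp.notMem_support_iff.mp hk])]
            simp
          have := hα ⟨fun k => m k, hdeg⟩
          simp only [vero] at this
          rw [this, mul_zero]
  -- conclude
  rw [Finset.sum_eq_single i (fun j _ hji => by
        rw [hQzero j (Finset.mem_erase.mpr ⟨hji, Finset.mem_univ j⟩), mul_zero])
      (fun h => absurd (Finset.mem_univ i) h)] at key
  exact (mul_eq_zero.mp key).resolve_right hQne
end

section
/- Let K be a field and d, n > 1 integers, N = binom(d+n-1, d). Let U_1, …, U_d be subspaces of K^n and let z ∈ K^n be a vector with z ∉ U_j for each j = 1, …, d. Then v_d(z) does not lie in the subspace of K^N spanned by v_d(U_1) ∪ ⋯ ∪ v_d(U_d). -/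
noncomputable section

open MvPolynomial

instance (n d : ℕ) : Fintype (VIdx n d) :=
  Fintype.ofInjective
    (fun α : VIdx n d => (fun i =>
      ⟨α.1 i, Nat.lt_succ_of_le ((Finset.single_le_sum
        (fun _ _ => Nat.zero_le _) (Finset.mem_univ i)).trans (le_of_eq α.2))⟩ :
        Fin n → Fin (d + 1)))
    (fun a b h => Subtype.ext (funext fun i => congrArg Fin.val (congrFun h i)))

/-- The embedding of `VIdx n d` into finsupps. -/
def vidxToFinsupp (n d : ℕ) (α : VIdx n d) : Fin n →₀ ℕ :=
  Finsupp.equivFunOnFinite.symm α.1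

lemma vidxToFinsupp_injective (n d : ℕ) : Function.Injective (vidxToFinsupp n d) := by
  intro a b h
  exact Subtype.ext (Finsupp.equivFunOnFinite.symm.injective h)

lemma key_eval {K : Type*} [Field K] {n d : ℕ} (F : MvPolynomial (Fin n) K)
    (hF : F.IsHomogeneous d) (t : Fin n → K) :
    ∑ α : VIdx n d, coeff (vidxToFinsupp n d α) F * vero K n d t α = eval t F := by
  classical
  have himg : ∑ α : VIdx n d, coeff (vidxToFinsupp n d α) F * vero K n d t α
      = ∑ m ∈ Finset.univ.image (vidxToFinsupp n d), coeff m F * ∏ i, t i ^ m i := by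
    rw [Finset.sum_image (fun a _ b _ h => vidxToFinsupp_injective n d h)]
    refine Finset.sum_congr rfl fun α _ => ?_
    simp [vero, vidxToFinsupp]
  rw [himg, eval_eq']
  refine (Finset.sum_subset ?_ ?_).symm
  · intro m hm
    have hc : coeff m F ≠ 0 := mem_support_iff.mp hm
    have hdeg : ∑ i, m i = d := by
      have := hF hc
      simpa [Finsupp.weight_apply, Finsupp.sum_fintype] using this
    refine Finset.mem_image.mpr ⟨⟨Finsupp.equivFunOnFinite m, hdeg⟩, Finset.mem_univ _, ?_⟩
    simp [vidxToFinsupp]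
  · intro m _ hm
    rw [notMem_support_iff.mp hm, zero_mul]

/-- If `z` is a point of `K^n` not in each of `d` subspaces `U_1, …, U_d`,
then `v_d(z)` is not in `⟨v_d(U_1), …, v_d(U_d)⟩`. -/
theorem veronesean_not_in_span (K : Type*) [Field K] (d n : ℕ)
    (hd : 1 < d) (hn : 1 < n)
    (U : Fin d → Submodule K (Fin n → K)) (z : Fin n → K)
    (hz : ∀ j, z ∉ U j) :
    vero K n d z ∉
      Submodule.span K (⋃ j, vero K n d '' (U j : Set (Fin n → K))) := by
  classical
  -- pick dual functionals vanishing on `U j` but not on `z`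
  have hg : ∀ j : Fin d, ∃ g : (Fin n → K) →ₗ[K] K, g z ≠ 0 ∧ ∀ u ∈ U j, g u = 0 := by
    intro j
    obtain ⟨g, hgz, hgU⟩ := (U j).exists_dual_map_eq_bot_of_notMem (hz j) inferInstance
    refine ⟨g, hgz, fun u hu => ?_⟩
    have : g u ∈ (U j).map g := Submodule.mem_map_of_mem hu
    rwa [hgU, Submodule.mem_bot] at this
  choose g hgz hgU using hg
  -- the product polynomial
  set F : MvPolynomial (Fin n) K :=
    ∏ j : Fin d, ∑ i : Fin n, C (g j (fun k => if i = k then 1 else 0)) * X i with hFdef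
  have hFhom : F.IsHomogeneous d := by
    have := MvPolynomial.IsHomogeneous.prod Finset.univ
      (fun j : Fin d => ∑ i : Fin n, C (g j (fun k => if i = k then 1 else 0)) * X i)
      (fun _ => 1)
      (fun j _ => MvPolynomial.IsHomogeneous.sum _ _ _ (fun i _ => by
        simpa using (isHomogeneous_C (Fin n) (g j (fun k => if i = k then 1 else 0))).mul
          (isHomogeneous_X K i)))
    simpa using this
  have hFeval : ∀ t : Fin n → K, eval t F = ∏ j : Fin d, g j t := by
    intro t
    rw [hFdef]
    simp only [map_prod, map_sum, eval_mul, eval_C, eval_X]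
    refine Finset.prod_congr rfl fun j _ => ?_
    rw [LinearMap.pi_apply_eq_sum_univ (g j) t]
    refine Finset.sum_congr rfl fun i _ => ?_
    rw [smul_eq_mul, mul_comm]
  -- the linear functional on `K^N`
  set L : (VIdx n d → K) →ₗ[K] K :=
    { toFun := fun x => ∑ α : VIdx n d, coeff (vidxToFinsupp n d α) F * x α
      map_add' := by
        intro x y
        simp [mul_add, Finset.sum_add_distrib]
      map_smul' := by
        intro c x
        simp [Finset.mul_sum, mul_left_comm] } with hLdef
  have hLvero : ∀ t : Fin n → K, L (vero K n d t) = ∏ j : Fin d, g j t := by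
    intro t
    rw [hLdef]
    simpa [key_eval F hFhom t] using hFeval t
  intro hmem
  have hspan : Submodule.span K (⋃ j, vero K n d '' (U j : Set (Fin n → K)))
      ≤ LinearMap.ker L := by
    rw [Submodule.span_le]
    rintro x hx
    simp only [Set.mem_iUnion, Set.mem_image] at hx
    obtain ⟨j, u, hu, rfl⟩ := hx
    simp only [SetLike.mem_coe, LinearMap.mem_ker]
    rw [hLvero]
    exact Finset.prod_eq_zero (Finset.mem_univ j) (hgU j u hu)
  have h0 : L (vero K n d z) = 0 := hspan hmem
  rw [hLvero] at h0
  exact (Finset.prod_ne_zero_iff.mpr fun j _ => hgz j) h0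

end
end

section
/- Let K be a field and d, n > 1 integers, N = binom(d+n-1, d). If U_0 is a subspace of K^n intersecting each of d subspaces U_1, …, U_d of K^n only in 0, then ⟨v_d(U_0)⟩ ∩ ⟨v_d(U_1) ∪ ⋯ ∪ v_d(U_d)⟩ = 0 in K^N. -/
open Finset

theorem Disjoint.exists_linearMap_eq_left_zero_right {K V W : Type*} [DivisionRing K]
    [AddCommGroup V] [Module K V] [AddCommGroup W] [Module K W] {p q : Submodule K V}
    (hpq : Disjoint p q) (f : V →ₗ[K] W) :
    ∃ g : V →ₗ[K] W, (∀ x ∈ p, g x = f x) ∧ ∀ x ∈ q, g x = 0 := by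
  obtain ⟨q', hqq', hpq'⟩ := hpq.symm.exists_isCompl
  refine ⟨LinearMap.ofIsCompl hpq'.symm (f.comp p.subtype) 0, fun x hx => ?_, fun x hx => ?_⟩
  · exact LinearMap.ofIsCompl_apply_left hpq'.symm ⟨x, hx⟩
  · exact LinearMap.ofIsCompl_apply_right hpq'.symm ⟨x, hqq' hx⟩

namespace VIdx

variable {n d : ℕ}

def ofFun (f : Fin d → Fin n) : VIdx n d :=
  ⟨fun i => #{k | f k = i}, (card_eq_sum_card_fiberwise fun k _ => mem_univ (f k)).symm.trans
    (card_fin d)⟩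

theorem ofFun_surjective : Function.Surjective (ofFun : (Fin d → Fin n) → VIdx n d) := by
  classical
  rintro ⟨α, hα⟩
  let s : Multiset (Fin n) := ∑ i, α i • {i}
  have hcount : ∀ i, s.count i = α i := by
    intro i
    simp [s, Multiset.count_sum', Multiset.count_singleton]
  have hcard : s.toList.length = d := by
    simp [s, Multiset.length_toList, hα]
  let v : List.Vector (Fin n) d := ⟨s.toList, hcard⟩
  refine ⟨v.get, Subtype.ext (funext fun i => ?_)⟩
  change #{k | v.get k = i} = α i
  rw [Fin.card_filter_univ_eq_vector_get_eq_count i v, ← hcount i, ← s.coe_toList,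
    Multiset.coe_count]
  rfl

end VIdx

theorem vero_ofFun {K : Type*} [Field K] {n d : ℕ} (t : Fin n → K) (f : Fin d → Fin n) :
    vero K n d t (VIdx.ofFun f) = ∏ k, t (f k) := by
  change ∏ i, t i ^ #{k | f k = i} = _
  rw [← prod_fiberwise_of_maps_to' (fun k _ => mem_univ (f k)) t]
  exact prod_congr rfl fun i _ => (prod_const (t i)).symm

theorem exists_linearMap_vero_eq_prod (K : Type*) [Field K] {n d : ℕ}
    (m : Fin d → (Fin n → K) →ₗ[K] K) :
    ∃ φ : (VIdx n d → K) →ₗ[K] K, ∀ t, φ (vero K n d t) = ∏ k, m k t := by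
  classical
  let e : Fin n → Fin n → K := fun i j => if i = j then 1 else 0
  refine ⟨∑ f : Fin d → Fin n, (∏ k, m k (e (f k))) •
    (LinearMap.proj (VIdx.ofFun f) : (VIdx n d → K) →ₗ[K] K), fun t => ?_⟩
  calc _ = ∑ f : Fin d → Fin n, ∏ k, t (f k) • m k (e (f k)) := by
        rw [LinearMap.sum_apply]
        refine sum_congr rfl fun f _ => ?_
        rw [LinearMap.smul_apply, LinearMap.proj_apply, vero_ofFun, smul_eq_mul, mul_comm]
        simp only [smul_eq_mul, prod_mul_distrib]
    _ = ∏ k, ∑ i, t i • m k (e i) := (Fintype.prod_sum fun k i => t i • m k (e i)).symm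
    _ = ∏ k, m k t := prod_congr rfl fun k _ => (LinearMap.pi_apply_eq_sum_univ (m k) t).symm

theorem veronesean_almost_independence_general (K : Type*) [Field K] (d n : ℕ)
    (U₀ : Submodule K (Fin n → K)) (U : Fin d → Submodule K (Fin n → K))
    (hU : ∀ j, U₀ ⊓ U j = ⊥) :
    Submodule.span K (vero K n d '' (U₀ : Set (Fin n → K))) ⊓
      Submodule.span K (⋃ j, vero K n d '' (U j : Set (Fin n → K))) = ⊥ := by
  refine eq_bot_iff.2 fun x hx => (Submodule.mem_bot K).2 (funext fun a => ?_)
  obtain ⟨hx₀, hx₁⟩ := Submodule.mem_inf.1 hx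
  obtain ⟨c, rfl⟩ := VIdx.ofFun_surjective a
  choose m hm₀ hm using fun k =>
    (disjoint_iff.2 (hU k)).exists_linearMap_eq_left_zero_right (LinearMap.proj (R := K) (c k))
  obtain ⟨φ, hφ⟩ := exists_linearMap_vero_eq_prod K m
  have hφ₀ :
      Set.EqOn (LinearMap.proj (R := K) (φ := fun _ => K) (VIdx.ofFun c)) φ (vero K n d '' U₀) := by
    rintro _ ⟨u, hu, rfl⟩
    simp only [LinearMap.proj_apply, vero_ofFun, hφ]
    exact prod_congr rfl fun k _ => (hm₀ k u hu).symm
  have hφ₁ : Set.EqOn φ 0 (⋃ j, vero K n d '' U j) := by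
    simp only [Set.EqOn, Set.mem_iUnion, Set.mem_image]
    rintro _ ⟨j, u, hu, rfl⟩
    exact (hφ u).trans (prod_eq_zero (mem_univ j) (hm j u hu))
  calc x (VIdx.ofFun c) = φ x := LinearMap.eqOn_span hφ₀ hx₀
    _ = 0 := LinearMap.eqOn_span (g := 0) hφ₁ hx₁

/-- If a subspace `U_0` of `K^n` intersects each of `d` subspaces
`U_1, …, U_d` only in `0`, then `⟨v_d(U_0)⟩ ∩ ⟨v_d(U_1), …, v_d(U_d)⟩ = 0`. -/
theorem veronesean_almost_independence (K : Type*) [Field K] (d n : ℕ)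
    (hd : 1 < d) (hn : 1 < n)
    (U₀ : Submodule K (Fin n → K)) (U : Fin d → Submodule K (Fin n → K))
    (hU : ∀ j, U₀ ⊓ U j = ⊥) :
    Submodule.span K (vero K n d '' (U₀ : Set (Fin n → K))) ⊓
      Submodule.span K (⋃ j, vero K n d '' (U j : Set (Fin n → K))) = ⊥ :=
  veronesean_almost_independence_general K d n U₀ U hU
end

section
/- Let K be a field and d, n > 1 integers, N = binom(d+n-1, d). If 𝒰 is any set of at least d+1 nonzero subspaces of K^n whose members pairwise intersect in 0, then {⟨v_d(U)⟩ : U ∈ 𝒰} is a (d+1)-independent set of subspaces of K^N; that is, for any d+1 distinct members U_0, …, U_d of 𝒰, the subspace of K^N spanned by ⟨v_d(U_0)⟩, …, ⟨v_d(U_d)⟩ is their direct sum. -/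
namespace VeroAux

variable {K : Type*} [Field K] {n d : ℕ}

/-- The multi-index of exponents determined by a function `f : Fin d → Fin n`. -/
def alphaOf (f : Fin d → Fin n) : VIdx n d :=
  ⟨fun i => ∑ j, if f j = i then 1 else 0, by
    rw [Finset.sum_comm]; simp⟩

lemma prod_pow_indicator {m : ℕ} (t : Fin n → K) (f : Fin m → Fin n) :
    (∏ i, t i ^ (∑ j, if f j = i then (1:ℕ) else 0)) = ∏ j, t (f j) := by
  induction m with
  | zero => simp
  | succ m ih =>
    have h : ∀ i, (∑ j : Fin (m+1), if f j = i then (1:ℕ) else 0)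
        = (if f 0 = i then 1 else 0) + ∑ j : Fin m, if f j.succ = i then (1:ℕ) else 0 :=
      fun i => Fin.sum_univ_succ _
    simp only [h, pow_add, Finset.prod_mul_distrib, ih (fun j => f j.succ),
      Fin.prod_univ_succ]
    congr 1
    simp [pow_ite]

lemma vero_alphaOf (t : Fin n → K) (f : Fin d → Fin n) :
    vero K n d t (alphaOf f) = ∏ j, t (f j) := by
  simp only [vero, alphaOf]
  exact prod_pow_indicator t f

/-- For linear forms `ℓ j` on `K^n`, the linear functional on `K^N` whose value on
`vero t` is `∏ j, ℓ j t`. -/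
noncomputable def Phi (ℓ : Fin d → ((Fin n → K) →ₗ[K] K)) : (VIdx n d → K) →ₗ[K] K :=
  ∑ f : Fin d → Fin n, (∏ j, ℓ j (Pi.single (f j) 1)) • LinearMap.proj (alphaOf f)

lemma Phi_apply (ℓ : Fin d → ((Fin n → K) →ₗ[K] K)) (y : VIdx n d → K) :
    Phi ℓ y = ∑ f : Fin d → Fin n, (∏ j, ℓ j (Pi.single (f j) 1)) * y (alphaOf f) := by
  simp [Phi, LinearMap.proj_apply]

lemma Phi_vero (ℓ : Fin d → ((Fin n → K) →ₗ[K] K)) (t : Fin n → K) :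
    Phi ℓ (vero K n d t) = ∏ j, ℓ j t := by
  have ht : ∀ j, ℓ j t = ∑ i, ℓ j (Pi.single i 1) * t i := by
    intro j
    conv_lhs => rw [← Finset.univ_sum_single t]
    rw [map_sum]
    refine Finset.sum_congr rfl fun i _ => ?_
    rw [mul_comm, ← smul_eq_mul, ← map_smul]
    congr 1
    rw [← Pi.single_smul, smul_eq_mul, mul_one]
  rw [Phi_apply]
  calc ∑ f : Fin d → Fin n, (∏ j, ℓ j (Pi.single (f j) 1)) * (vero K n d t) (alphaOf f)
      = ∑ f : Fin d → Fin n, ∏ j, (ℓ j (Pi.single (f j) 1) * t (f j)) := by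
        refine Finset.sum_congr rfl fun f _ => ?_
        rw [vero_alphaOf, Finset.prod_mul_distrib]
    _ = ∏ j, ∑ i, ℓ j (Pi.single i 1) * t i := by
        rw [Finset.prod_univ_sum, Fintype.piFinset_univ]
    _ = ∏ j, ℓ j t := by
        exact Finset.prod_congr rfl fun j _ => (ht j).symm

lemma Phi_coord (g : Fin d → Fin n) (y : VIdx n d → K) :
    Phi (fun j => LinearMap.proj (g j)) y = y (alphaOf g) := by
  rw [Phi_apply, Finset.sum_eq_single g]
  · simp
  · intro f _ hfg
    obtain ⟨j, hj⟩ : ∃ j, f j ≠ g j := by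
      by_contra hc; push_neg at hc; exact hfg (funext hc)
    have hz : (LinearMap.proj (g j) : (Fin n → K) →ₗ[K] K) (Pi.single (f j) 1) = 0 := by
      simp [LinearMap.proj_apply, Pi.single_apply, Ne.symm hj]
    rw [Finset.prod_eq_zero (Finset.mem_univ j) hz, zero_mul]
  · intro h; exact absurd (Finset.mem_univ g) h

lemma exists_fiber_counts : ∀ (m : ℕ) (β : Fin n → ℕ), (∑ i, β i = m) →
    ∃ g : Fin m → Fin n, ∀ i, (∑ j, if g j = i then (1:ℕ) else 0) = β i := by
  intro m
  induction m with
  | zero =>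
    intro β hβ
    refine ⟨Fin.elim0, fun i => ?_⟩
    have h0 : β i = 0 := by
      by_contra h
      exact h (Finset.sum_eq_zero_iff.mp hβ i (Finset.mem_univ i))
    simp [h0]
  | succ m ih =>
    intro β hβ
    have hex : ∃ i₀, β i₀ ≠ 0 := by
      by_contra h; push_neg at h
      rw [Finset.sum_eq_zero (fun i _ => h i)] at hβ
      exact Nat.succ_ne_zero m hβ.symm
    obtain ⟨i₀, hi₀⟩ := hex
    have hsum' : ∑ i, Function.update β i₀ (β i₀ - 1) i = m := by
      rw [Finset.sum_update_of_mem (Finset.mem_univ i₀)]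
      have h2 : β i₀ + ∑ i ∈ Finset.univ \ {i₀}, β i = m + 1 := by
        rw [← Finset.erase_eq, Finset.add_sum_erase _ β (Finset.mem_univ i₀)]; exact hβ
      omega
    obtain ⟨g', hg'⟩ := ih (Function.update β i₀ (β i₀ - 1)) hsum'
    refine ⟨Fin.cons i₀ g', fun i => ?_⟩
    rw [Fin.sum_univ_succ]
    simp only [Fin.cons_zero, Fin.cons_succ]
    rw [hg' i, Function.update_apply]
    by_cases h : i = i₀
    · subst h; simp; omega
    · have h' : ¬ i₀ = i := fun hh => h hh.symm
      simp [h, h']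

lemma alphaOf_surjective (γ : VIdx n d) : ∃ g : Fin d → Fin n, alphaOf g = γ := by
  obtain ⟨g, hg⟩ := exists_fiber_counts d γ.1 γ.2
  exact ⟨g, Subtype.ext (funext hg)⟩

lemma exists_extension {V : Type*} [AddCommGroup V] [Module K V]
    {U W : Submodule K V} (h : U ⊓ W = ⊥) (lam : V →ₗ[K] K) :
    ∃ ℓ : V →ₗ[K] K, (∀ w ∈ W, ℓ w = 0) ∧ (∀ u ∈ U, ℓ u = lam u) := by
  obtain ⟨T, hT⟩ := Submodule.exists_isCompl (U ⊔ W)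
  have hWT : (W ⊔ T) ⊓ (U ⊔ W) = W := by
    rw [sup_inf_assoc_of_le _ (le_sup_right : W ≤ U ⊔ W)]
    rw [(hT.disjoint.symm).eq_bot, sup_bot_eq]
  have hcompl : IsCompl U (W ⊔ T) := by
    constructor
    · rw [disjoint_iff, ← le_bot_iff, ← h]
      refine le_inf inf_le_left ?_
      calc U ⊓ (W ⊔ T) ≤ (U ⊔ W) ⊓ (W ⊔ T) := inf_le_inf_right _ le_sup_left
        _ = W := by rw [inf_comm]; exact hWT
    · rw [codisjoint_iff, ← sup_assoc]
      exact hT.codisjoint.eq_top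
  refine ⟨lam ∘ₗ U.subtype ∘ₗ (U.linearProjOfIsCompl (W ⊔ T) hcompl), ?_, ?_⟩
  · intro w hw
    have : (U.linearProjOfIsCompl (W ⊔ T) hcompl) w = 0 :=
      Submodule.linearProjOfIsCompl_apply_right hcompl ⟨w, Submodule.mem_sup_left hw⟩
    simp [this]
  · intro u hu
    have : (U.linearProjOfIsCompl (W ⊔ T) hcompl) u = ⟨u, hu⟩ :=
      Submodule.linearProjOfIsCompl_apply_left hcompl ⟨u, hu⟩
    simp [this]

end VeroAux

/-- If `𝒰` is a set of at least `d+1` nonzero subspaces of `K^n` pairwise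
intersecting in `0`, then `{⟨v_d(U)⟩ : U ∈ 𝒰}` is a `(d+1)`-independent set of
subspaces of `K^N`: for any `d+1` distinct members, the subspace spanned by
their Veronesean images is the direct sum of those images. -/
theorem veronesean_independence (K : Type*) [Field K] (d n : ℕ)
    (hd : 1 < d) (hn : 1 < n)
    (𝒰 : Set (Submodule K (Fin n → K)))
    (hcard : (d + 1 : ℕ∞) ≤ 𝒰.encard)
    (hne : ∀ U ∈ 𝒰, U ≠ ⊥)
    (hpair : ∀ U ∈ 𝒰, ∀ U' ∈ 𝒰, U ≠ U' → U ⊓ U' = ⊥) :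
    ∀ U : Fin (d + 1) → Submodule K (Fin n → K),
      Function.Injective U → (∀ i, U i ∈ 𝒰) →
      iSupIndep (fun i =>
        Submodule.span K (vero K n d '' (U i : Set (Fin n → K)))) := by
  intro U hinj hmem
  rw [iSupIndep_def]
  intro i
  refine Submodule.disjoint_def.mpr fun x hx hx' => ?_
  obtain ⟨m, c, y, hrep⟩ := Submodule.mem_span_set'.mp hx
  have hy := fun k => (y k).2
  simp only [Set.mem_image, SetLike.mem_coe] at hy
  choose u hu hvu using hy
  have key : ∀ lam : Fin d → ((Fin n → K) →ₗ[K] K), VeroAux.Phi lam x = 0 := by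
    intro lam
    have hUW : ∀ k : Fin d, U i ⊓ U (i.succAbove k) = ⊥ := fun k =>
      hpair _ (hmem i) _ (hmem _) (fun he => Fin.succAbove_ne i k (hinj he).symm)
    choose ℓ hℓ0 hℓeq using fun k => VeroAux.exists_extension (hUW k) (lam k)
    have hker : VeroAux.Phi ℓ x = 0 := by
      have hsup : (⨆ j, ⨆ (_ : j ≠ i),
          Submodule.span K (vero K n d '' (U j : Set (Fin n → K))))
          ≤ LinearMap.ker (VeroAux.Phi ℓ) := by
        refine iSup_le fun j => iSup_le fun hj => ?_
        rw [Submodule.span_le]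
        rintro z ⟨w, hw, rfl⟩
        obtain ⟨k, hk⟩ := Fin.exists_succAbove_eq hj
        simp only [SetLike.mem_coe, LinearMap.mem_ker]
        rw [VeroAux.Phi_vero]
        refine Finset.prod_eq_zero (Finset.mem_univ k) (hℓ0 k w ?_)
        rw [hk]; exact hw
      exact LinearMap.mem_ker.mp (hsup hx')
    have heq : VeroAux.Phi lam x = VeroAux.Phi ℓ x := by
      rw [← hrep]
      simp only [map_sum, map_smul]
      refine Finset.sum_congr rfl fun k _ => ?_
      congr 1
      rw [← hvu k, VeroAux.Phi_vero, VeroAux.Phi_vero]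
      exact Finset.prod_congr rfl fun j _ => (hℓeq j (u k) (hu k)).symm
    rw [heq]; exact hker
  funext γ
  obtain ⟨g, rfl⟩ := VeroAux.alphaOf_surjective γ
  have hh := key (fun j => LinearMap.proj (g j))
  rw [VeroAux.Phi_coord] at hh
  simpa using hh
end

section
/- Let K be a field, d, n > 1 and e ≥ 1 integers, N = binom(d+n-1, d). If 𝒰 is any (e+1)-independent set of at least de+1 nonzero subspaces of K^n, then {⟨v_d(U)⟩ : U ∈ 𝒰} is a (de+1)-independent set of subspaces of K^N; that is, for any de+1 distinct members U_0, …, U_{de} of 𝒰, the subspace of K^N spanned by ⟨v_d(U_0)⟩, …, ⟨v_d(U_{de})⟩ is their direct sum. -/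
lemma exists_sep {K V : Type*} [Field K] [AddCommGroup V] [Module K V]
    (A B : Submodule K V) (hAB : A ⊓ B = ⊥) (f : V →ₗ[K] K) :
    ∃ ℓ : V →ₗ[K] K, (∀ a ∈ A, ℓ a = f a) ∧ (∀ b ∈ B, ℓ b = 0) := by
  classical
  set mk := B.mkQ with hmk
  have hinj : Function.Injective (mk.comp A.subtype) := by
    rw [← LinearMap.ker_eq_bot]
    rw [Submodule.eq_bot_iff]
    rintro ⟨a, ha⟩ h
    have : mk a = 0 := h
    have hb : a ∈ B := by
      rwa [hmk, Submodule.mkQ_apply, Submodule.Quotient.mk_eq_zero] at this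
    have : a ∈ A ⊓ B := ⟨ha, hb⟩
    rw [hAB] at this
    exact Subtype.ext this
  set e := LinearEquiv.ofInjective (mk.comp A.subtype) hinj with he
  set f' : (LinearMap.range (mk.comp A.subtype)) →ₗ[K] K :=
    (f.comp A.subtype).comp (e.symm : _ →ₗ[K] A) with hf'
  obtain ⟨g, hg⟩ := LinearMap.exists_extend f'
  refine ⟨g.comp mk, ?_, ?_⟩
  · intro a ha
    have h1 : mk a = (LinearMap.range (mk.comp A.subtype)).subtype (e ⟨a, ha⟩) := rfl
    have h2 : g (mk a) = f' (e ⟨a, ha⟩) := by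
      rw [h1]
      exact LinearMap.congr_fun hg (e ⟨a, ha⟩)
    simp only [hf', LinearMap.comp_apply] at h2 ⊢
    rw [h2]
    have : (e.symm (e ⟨a, ha⟩) : V) = (⟨a, ha⟩ : A) := by
      rw [LinearEquiv.symm_apply_apply]
    simp [this]
  · intro b hb
    have : mk b = 0 := by
      rw [hmk, Submodule.mkQ_apply, Submodule.Quotient.mk_eq_zero]; exact hb
    simp [LinearMap.comp_apply, this]

lemma exists_fiber_fun {n d : ℕ} (α : Fin n → ℕ) (hα : ∑ i, α i = d) :
    ∃ g : Fin d → Fin n, ∀ i, (Finset.univ.filter (fun m => g m = i)).card = α i := by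
  classical
  have hcard : Fintype.card (Σ i : Fin n, Fin (α i)) = d := by
    simp [Fintype.card_sigma, hα]
  set E := Fintype.equivFinOfCardEq hcard with hE
  refine ⟨fun m => (E.symm m).1, fun i => ?_⟩
  rw [← Fintype.card_subtype]
  have e1 : {m : Fin d // (E.symm m).1 = i} ≃ {s : Σ j : Fin n, Fin (α j) // s.1 = i} :=
    Equiv.subtypeEquiv E.symm (fun _ => Iff.rfl)
  have e2 : {s : Σ j : Fin n, Fin (α j) // s.1 = i} ≃ Fin (α i) :=
    { toFun := fun s => s.2 ▸ s.1.2
      invFun := fun x => ⟨⟨i, x⟩, rfl⟩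
      left_inv := by rintro ⟨⟨a, b⟩, rfl⟩; rfl
      right_inv := fun x => rfl }
  rw [Fintype.card_congr (e1.trans e2), Fintype.card_fin]

lemma prod_comp_eq_prod_pow {K : Type*} [CommMonoid K] {n d : ℕ}
    (h : Fin d → Fin n) (u : Fin n → K) :
    ∏ m, u (h m) = ∏ i', u i' ^ (Finset.univ.filter fun m => h m = i').card := by
  rw [← Finset.prod_fiberwise_of_maps_to (fun m _ => Finset.mem_univ (h m)) (fun m => u (h m))]
  refine Finset.prod_congr rfl fun i' _ => ?_
  rw [Finset.prod_congr rfl (fun m hm => congrArg u (Finset.mem_filter.mp hm).2),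
    Finset.prod_const]

set_option maxHeartbeats 1000000 in
/-- If `𝒰` is an `(e+1)`-independent set of at least `de+1` nonzero subspaces
of `K^n`, then `{⟨v_d(U)⟩ : U ∈ 𝒰}` is a `(de+1)`-independent set of subspaces
of `K^N`. -/
theorem veronesean_e_plus_one_independence (K : Type*) [Field K] (d n e : ℕ)
    (hd : 1 < d) (hn : 1 < n) (he : 1 ≤ e)
    (𝒰 : Set (Submodule K (Fin n → K)))
    (hcard : (d * e + 1 : ℕ∞) ≤ 𝒰.encard)
    (hne : ∀ U ∈ 𝒰, U ≠ ⊥)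
    (hind : ∀ U : Fin (e + 1) → Submodule K (Fin n → K),
      Function.Injective U → (∀ i, U i ∈ 𝒰) → iSupIndep U) :
    ∀ U : Fin (d * e + 1) → Submodule K (Fin n → K),
      Function.Injective U → (∀ i, U i ∈ 𝒰) →
      iSupIndep (fun i =>
        Submodule.span K (vero K n d '' (U i : Set (Fin n → K)))) := by
  classical
  intro U hUinj hU i
  rw [Submodule.disjoint_def]
  intro x hxi hxo
  funext α
  show x α = 0
  -- reindex the other d*e subspaces by Fin d × Fin e
  have hcard2 : Fintype.card (Fin d × Fin e) = Fintype.card {j : Fin (d * e + 1) // j ≠ i} := by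
    simp [Fintype.card_subtype_compl, Fintype.card_subtype_eq]
  obtain ⟨Eo⟩ : Nonempty (Fin d × Fin e ≃ {j : Fin (d * e + 1) // j ≠ i}) :=
    ⟨Fintype.equivOfCardEq hcard2⟩
  set V : Fin d → Submodule K (Fin n → K) :=
    fun m => ⨆ k : Fin e, U (Eo (m, k)) with hV
  have hdisj : ∀ m : Fin d, U i ⊓ V m = ⊥ := by
    intro m
    set W : Fin (e + 1) → Submodule K (Fin n → K) :=
      fun t => Fin.cases (U i) (fun k => U (Eo (m, k))) t with hW
    have hW0 : W 0 = U i := rfl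
    have hWs : ∀ k : Fin e, W k.succ = U (Eo (m, k)) := fun k => rfl
    have hWinj : Function.Injective W := by
      intro s t hst
      induction s using Fin.cases with
      | zero =>
        induction t using Fin.cases with
        | zero => rfl
        | succ k =>
          rw [hW0, hWs] at hst
          exact absurd (hUinj hst).symm (Eo (m, k)).2
      | succ k =>
        induction t using Fin.cases with
        | zero =>
          rw [hW0, hWs] at hst
          exact absurd (hUinj hst) (Eo (m, k)).2
        | succ k' =>
          rw [hWs, hWs] at hst
          have h9 := Eo.injective (Subtype.ext (hUinj hst))
          rw [Prod.mk.injEq] at h9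
          rw [h9.2]
    have hWmem : ∀ t, W t ∈ 𝒰 := by
      intro t
      induction t using Fin.cases with
      | zero => exact hU i
      | succ k => exact hU _
    have hdis := hind W hWinj hWmem 0
    have hle : V m ≤ ⨆ (t : Fin (e + 1)) (_ : t ≠ 0), W t := by
      refine iSup_le fun k => ?_
      rw [← hWs k]
      exact le_iSup₂ (f := fun (t : Fin (e + 1)) (_ : t ≠ 0) => W t) k.succ (Fin.succ_ne_zero k)
    have := hdis.mono_right hle
    rw [hW0] at this
    exact disjoint_iff.mp this
  -- linear functionals
  obtain ⟨g, hg⟩ := exists_fiber_fun α.1 α.2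
  choose ℓ hℓA hℓB using fun m : Fin d =>
    exists_sep (U i) (V m) (hdisj m) (LinearMap.proj (g m))
  -- index map
  have βsum : ∀ h : Fin d → Fin n, ∑ i', (Finset.univ.filter fun m => h m = i').card = d := by
    intro h
    rw [← Finset.card_eq_sum_card_fiberwise (fun m _ => Finset.mem_univ (h m))]
    simp
  set β : (Fin d → Fin n) → VIdx n d :=
    fun h => ⟨fun i' => (Finset.univ.filter fun m => h m = i').card, βsum h⟩ with hβ
  set δ : Fin n → (Fin n → K) := fun i' j => if i' = j then 1 else 0 with hδ
  set F : (VIdx n d → K) →ₗ[K] K :=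
    ∑ h : Fin d → Fin n, (∏ m, ℓ m (δ (h m))) • LinearMap.proj (R := K) (β h) with hF
  have hFvero : ∀ u : Fin n → K, F (vero K n d u) = ∏ m, ℓ m u := by
    intro u
    have h1 : F (vero K n d u)
        = ∑ h : Fin d → Fin n, (∏ m, ℓ m (δ (h m))) * vero K n d u (β h) := by
      rw [hF, LinearMap.sum_apply]
      refine Finset.sum_congr rfl fun h _ => ?_
      rw [LinearMap.smul_apply, LinearMap.proj_apply, smul_eq_mul]
    have h2 : ∀ h : Fin d → Fin n, vero K n d u (β h) = ∏ m, u (h m) := by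
      intro h
      rw [prod_comp_eq_prod_pow h u]
      rfl
    rw [h1]
    simp_rw [h2]
    have h3 : ∀ h : Fin d → Fin n,
        (∏ m, ℓ m (δ (h m))) * ∏ m, u (h m) = ∏ m, (ℓ m (δ (h m)) * u (h m)) := by
      intro h
      rw [Finset.prod_mul_distrib]
    simp_rw [h3]
    have h4 : ∀ m, ℓ m u = ∑ i', ℓ m (δ i') * u i' := by
      intro m
      rw [LinearMap.pi_apply_eq_sum_univ (ℓ m) u]
      exact Finset.sum_congr rfl fun i' _ => by rw [smul_eq_mul, mul_comm]
    calc ∑ h : Fin d → Fin n, ∏ m, (ℓ m (δ (h m)) * u (h m))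
        = ∑ h ∈ Fintype.piFinset (fun _ : Fin d => (Finset.univ : Finset (Fin n))),
            ∏ m, (ℓ m (δ (h m)) * u (h m)) := by rw [Fintype.piFinset_univ]
      _ = ∏ m, ∑ i', ℓ m (δ i') * u i' := (Finset.prod_univ_sum (fun _ : Fin d => (Finset.univ : Finset (Fin n))) (fun m i' => ℓ m (δ i') * u i')).symm
      _ = ∏ m, ℓ m u := by
            refine Finset.prod_congr rfl fun m _ => ?_
            rw [h4 m]
  -- F vanishes on the other spans
  have hFx0 : F x = 0 := by
    have hker : (⨆ (j) (_ : j ≠ i),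
        Submodule.span K (vero K n d '' (U j : Set (Fin n → K)))) ≤ LinearMap.ker F := by
      refine iSup₂_le fun j hj => ?_
      rw [Submodule.span_le]
      rintro _ ⟨u, hu, rfl⟩
      simp only [SetLike.mem_coe, LinearMap.mem_ker]
      rw [hFvero]
      obtain ⟨⟨m, k⟩, hmk⟩ := Eo.surjective ⟨j, hj⟩
      refine Finset.prod_eq_zero (Finset.mem_univ m) ?_
      apply hℓB m u
      have h5 : U j = U (Eo (m, k)) := by rw [hmk]
      have h6 : U ((Eo (m, k)) : Fin (d * e + 1)) ≤ V m :=
        le_iSup (fun k' : Fin e => U (Eo (m, k'))) k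
      rw [h5] at hu
      exact h6 hu
    exact hker hxo
  -- F agrees with the α-coordinate on the span of vero '' U i
  have hFxα : F x = x α := by
    have hker2 : Submodule.span K (vero K n d '' (U i : Set (Fin n → K)))
        ≤ LinearMap.ker (F - LinearMap.proj (R := K) α) := by
      rw [Submodule.span_le]
      rintro _ ⟨u, hu, rfl⟩
      simp only [SetLike.mem_coe, LinearMap.mem_ker, LinearMap.sub_apply,
        LinearMap.proj_apply]
      rw [hFvero, sub_eq_zero]
      have h7 : ∀ m, ℓ m u = u (g m) := fun m => hℓA m u hu
      calc ∏ m, ℓ m u = ∏ m, u (g m) := Finset.prod_congr rfl fun m _ => h7 m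
        _ = ∏ i', u i' ^ (Finset.univ.filter fun m => g m = i').card :=
            prod_comp_eq_prod_pow g u
        _ = ∏ i', u i' ^ α.1 i' := by
            refine Finset.prod_congr rfl fun i' _ => ?_
            rw [hg i']
        _ = vero K n d u α := rfl
    have := hker2 hxi
    rw [LinearMap.mem_ker, LinearMap.sub_apply, LinearMap.proj_apply, sub_eq_zero] at this
    exact this
  rw [← hFxα, hFx0]
end

section
/- Let K be a field, d, n > 1 integers, and r ≥ 1 an integer such that K has more than (r+1)²/2 elements (in particular any infinite K qualifies) and such that the binomial coefficient binom(d, i) is nonzero in K for all 0 ≤ i ≤ r. Then any r+1 distinct powerpoints of A_d are independent: if f_0, …, f_r ∈ A_1 are nonzero linear forms spanning pairwise distinct 1-spaces, then f_0^d, …, f_r^d are linearly independent over K. -/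
/-!
Choose `α ∈ (Kⁿ)*` off the `r + 1` hyperplanes `α(fᵢ) = 0`, then `β` off the `(r+1).choose 2`
hyperplanes `α(fᵢ) β(fⱼ) = α(fⱼ) β(fᵢ)`; both steps use that a vector space over `K` is not a
union of fewer than `#K` proper subspaces, which is where `(r + 1)² < 2 #K` enters. Restricting
to the line `t ↦ t w + v` dual to `(α, β)` sends `fᵢ^d` to `α(fᵢ)^d (X + tᵢ)^d` with pairwise
distinct slopes `tᵢ = β(fᵢ) / α(fᵢ)`. In a vanishing combination of these, the coefficients of
`X^d, …, X^(d-r)` form a Vandermonde system in the `tᵢ`, scaled by the nonzero `d.choose j`.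
-/

open MvPolynomial

lemma natCast_lt_enatCard_of_lt_two_mul {K : Type*} {m N : ℕ}
    (hK : (N : Cardinal) < 2 * Cardinal.mk K) (hm : 2 * m ≤ N) : (m : ℕ∞) < ENat.card K := by
  by_contra! h
  have hKm : Cardinal.mk K ≤ m := by
    rwa [ENat.card, Cardinal.toENat_le_natCast] at h
  have : (N : Cardinal) < 2 * m := hK.trans_le (by gcongr)
  exact_mod_cast this.not_ge (by exact_mod_cast hm)

section

variable {K V : Type*} [Field K] [AddCommGroup V] [Module K V]

lemma Module.Dual.exists_forall_mem_apply_ne_zero_of_card_lt {ι : Type*} (s : Finset ι)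
    (φ : ι → Module.Dual K V) (hφ : ∀ i ∈ s, φ i ≠ 0) (hs : s.card < ENat.card K) :
    ∃ x, ∀ i ∈ s, φ i x ≠ 0 := by
  obtain ⟨x, -, hx⟩ := Set.exists_of_ssubset <|
    Submodule.iUnion_ssubset_of_forall_ne_top_of_card_lt Finset.univ
      (fun i : s ↦ LinearMap.ker (φ i)) (fun i ↦ by simpa using hφ i i.2) (by simpa using hs)
  exact ⟨x, fun i hi h ↦
    hx (Set.mem_biUnion (Finset.mem_univ ⟨i, hi⟩) (LinearMap.mem_ker.2 h))⟩

lemma Submodule.span_singleton_ne_of_map_ne {W : Type*} [AddCommGroup W] [Module K W]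
    (L : V →ₗ[K] W) {x y : V} (h : K ∙ L x ≠ K ∙ L y) : K ∙ x ≠ K ∙ y := fun hxy ↦
  h (by rw [← Set.image_singleton, ← Submodule.map_span, hxy, Submodule.map_span,
    Set.image_singleton])

lemma smul_sub_smul_ne_zero_of_span_singleton_ne {x y : V} (hxy : K ∙ x ≠ K ∙ y) {a b : K}
    (ha : a ≠ 0) (hb : b ≠ 0) : a • y - b • x ≠ 0 := by
  intro h
  apply hxy
  rw [← Submodule.span_singleton_smul_eq (isUnit_iff_ne_zero.2 hb),
    ← Submodule.span_singleton_smul_eq (isUnit_iff_ne_zero.2 ha) y, sub_eq_zero.1 h]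

lemma exists_dual_pair_forall_ne_zero_pairwise_cross_ne {ι : Type*} [Fintype ι] [LinearOrder ι]
    {u : ι → V} (hu : ∀ i, u i ≠ 0) (hspan : Pairwise fun i j ↦ K ∙ u i ≠ K ∙ u j)
    (hcard : Fintype.card ι < ENat.card K) (hpairs : (Fintype.card ι).choose 2 < ENat.card K) :
    ∃ α β : Module.Dual K V, (∀ i, α (u i) ≠ 0) ∧
      Pairwise fun i j ↦ α (u i) * β (u j) ≠ α (u j) * β (u i) := by
  obtain ⟨α, hα⟩ := Module.Dual.exists_forall_mem_apply_ne_zero_of_card_lt Finset.univ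
    (fun i ↦ Module.Dual.eval K V (u i))
    (fun i _ ↦ by simpa only [ne_eq, Module.eval_apply_eq_zero_iff] using hu i)
    (by simpa using hcard)
  replace hα : ∀ i, α (u i) ≠ 0 := fun i ↦ hα i (Finset.mem_univ i)
  obtain ⟨β, hβ⟩ := Module.Dual.exists_forall_mem_apply_ne_zero_of_card_lt
    {p : ι × ι | p.1 < p.2}
    (fun p ↦ Module.Dual.eval K V (α (u p.1) • u p.2 - α (u p.2) • u p.1))
    (fun p hp ↦ by
      simpa only [ne_eq, Module.eval_apply_eq_zero_iff] using
        smul_sub_smul_ne_zero_of_span_singleton_ne (hspan (Finset.mem_filter.1 hp).2.ne)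
          (hα _) (hα _))
    (by rwa [Fintype.card_product_filter_lt])
  refine ⟨α, β, hα, fun i j hij h ↦ ?_⟩
  rcases hij.lt_or_gt with hlt | hgt
  · exact hβ (i, j) (by simpa using hlt) (by simp [h])
  · exact hβ (j, i) (by simpa using hgt) (by simp [h])

end

namespace Polynomial

variable {K : Type*} [Field K] {m d : ℕ}

theorem linearIndependent_X_add_C_pow {t : Fin m → K} (ht : Function.Injective t)
    (hd : ∀ j < m, (d.choose j : K) ≠ 0) :
    LinearIndependent K fun i ↦ (X + C (t i)) ^ d := by
  rw [Fintype.linearIndependent_iff]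
  intro c hc
  refine congrFun (Matrix.eq_zero_of_forall_pow_sum_mul_pow_eq_zero ht fun j ↦ ?_)
  have hjd : (j : ℕ) ≤ d := by
    by_contra! h
    exact hd j j.2 (by rw [Nat.choose_eq_zero_of_lt h, Nat.cast_zero])
  have hcoeff := congrArg (coeff · (d - j)) hc
  simp only [finsetSum_coeff, coeff_smul, coeff_X_add_C_pow, Nat.sub_sub_self hjd,
    Nat.choose_symm hjd, smul_eq_mul, coeff_zero, ← mul_assoc, ← Finset.sum_mul] at hcoeff
  exact (mul_eq_zero.1 hcoeff).resolve_right (hd j j.2)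

theorem linearIndependent_C_mul_X_add_C_pow {a b : Fin m → K} (ha : ∀ i, a i ≠ 0)
    (hab : Pairwise fun i j ↦ a i * b j ≠ a j * b i) (hd : ∀ j < m, (d.choose j : K) ≠ 0) :
    LinearIndependent K fun i ↦ (C (a i) * X + C (b i)) ^ d := by
  have hslope : Function.Injective fun i ↦ b i / a i := fun i j hij ↦ by
    by_contra hne
    exact hab hne (by linear_combination -(div_eq_div_iff (ha i) (ha j)).1 hij)
  convert (linearIndependent_X_add_C_pow hslope hd).units_smul
    fun i ↦ Units.mk0 (a i ^ d) (pow_ne_zero d (ha i)) using 1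
  ext1 i
  simp [Units.smul_def, smul_eq_C_mul, ← mul_pow, mul_add, ← C_mul, mul_div_cancel₀ _ (ha i)]

end Polynomial

namespace MvPolynomial

variable {K : Type*} [Field K] {n : ℕ}

/-- Pullback along the line `t ↦ t • w + v` of `Kⁿ`, where `α = w ⬝ᵥ ·` and `β = v ⬝ᵥ ·`. -/
noncomputable def restrictToLine (α β : Module.Dual K (Fin n → K)) :
    MvPolynomial (Fin n) K →ₐ[K] Polynomial K :=
  aeval fun k ↦
    Polynomial.C (α (Pi.single k 1)) * Polynomial.X + Polynomial.C (β (Pi.single k 1))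

theorem restrictToLine_sum_smul_X (α β : Module.Dual K (Fin n → K)) (u : Fin n → K) :
    restrictToLine α β (∑ k, u k • X k) =
      Polynomial.C (α u) * Polynomial.X + Polynomial.C (β u) := by
  conv_rhs => rw [← (Pi.basisFun K (Fin n)).sum_repr u]
  simp [restrictToLine, Finset.sum_add_distrib, Finset.sum_mul, Polynomial.smul_eq_C_mul,
    mul_assoc]

end MvPolynomial

theorem powerpoint_independence_small_char_general (K : Type*) [Field K] (d n r : ℕ)
    (hr : 1 ≤ r)
    (hK : ((r + 1) ^ 2 : Cardinal) < 2 * Cardinal.mk K)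
    (hbin : ∀ i ≤ r, (d.choose i : K) ≠ 0)
    (f : Fin (r + 1) → MvPolynomial (Fin n) K)
    (hf : ∀ i, f i ∈ homogeneousSubmodule (Fin n) K 1)
    (hf0 : ∀ i, f i ≠ 0)
    (hfd : ∀ i j, i ≠ j →
      Submodule.span K {f i} ≠ Submodule.span K {f j}) :
    LinearIndependent K (fun i => f i ^ d) := by
  choose u hu using fun i ↦ (Submodule.mem_span_range_iff_exists_fun K).1
    (homogeneousSubmodule_one_eq_span_X (σ := Fin n) (R := K) ▸ hf i)
  have hLu : ∀ i, Fintype.linearCombination K X (u i) = f i := fun i ↦ by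
    rw [Fintype.linearCombination_apply, hu]
  have hu0 : ∀ i, u i ≠ 0 := fun i h ↦ hf0 i (by rw [← hLu, h, map_zero])
  have hspan : Pairwise fun i j ↦ K ∙ u i ≠ K ∙ u j := fun i j hij ↦
    Submodule.span_singleton_ne_of_map_ne _ (by rw [hLu, hLu]; exact hfd i j hij)
  have hK' : (((r + 1) ^ 2 : ℕ) : Cardinal) < 2 * Cardinal.mk K := by exact_mod_cast hK
  have hcard : ((r + 1 : ℕ) : ℕ∞) < ENat.card K :=
    natCast_lt_enatCard_of_lt_two_mul hK' (by nlinarith)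
  have hpairs : ((r + 1).choose 2 : ℕ∞) < ENat.card K := by
    refine natCast_lt_enatCard_of_lt_two_mul hK' ?_
    calc 2 * (r + 1).choose 2 ≤ (r + 1) * r := by
          simpa [Nat.choose_two_right] using Nat.mul_div_le ((r + 1) * r) 2
      _ ≤ (r + 1) ^ 2 := by nlinarith
  obtain ⟨α, β, hα, hαβ⟩ := exists_dual_pair_forall_ne_zero_pairwise_cross_ne hu0 hspan
    (by simpa using hcard) (by simpa using hpairs)
  have hrestrict : ∀ i, restrictToLine α β (f i ^ d) =
      (Polynomial.C (α (u i)) * Polynomial.X + Polynomial.C (β (u i))) ^ d := fun i ↦ by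
    rw [map_pow, ← hu i, restrictToLine_sum_smul_X]
  refine LinearIndependent.of_comp (restrictToLine α β).toLinearMap ?_
  simpa only [Function.comp_def, AlgHom.toLinearMap_apply, hrestrict] using
    Polynomial.linearIndependent_C_mul_X_add_C_pow hα hαβ fun j hj ↦
      hbin j (Nat.lt_succ_iff.1 hj)

/-- If `K` has more than `(r+1)²/2` elements and the binomial coefficients
`d.choose i`, `0 ≤ i ≤ r`, are nonzero in `K`, then any `r+1` distinct
powerpoints of `A_d` are independent. -/
theorem powerpoint_independence_small_char (K : Type*) [Field K] (d n r : ℕ)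
    (hd : 1 < d) (hn : 1 < n) (hr : 1 ≤ r)
    (hK : ((r + 1) ^ 2 : Cardinal) < 2 * Cardinal.mk K)
    (hbin : ∀ i ≤ r, (d.choose i : K) ≠ 0)
    (f : Fin (r + 1) → MvPolynomial (Fin n) K)
    (hf : ∀ i, f i ∈ homogeneousSubmodule (Fin n) K 1)
    (hf0 : ∀ i, f i ≠ 0)
    (hfd : ∀ i j, i ≠ j →
      Submodule.span K {f i} ≠ Submodule.span K {f j}) :
    LinearIndependent K (fun i => f i ^ d) :=
  powerpoint_independence_small_char_general K d n r hr hK hbin f hf hf0 hfd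
end

section
/- Let K be a field, A = K[x_1,…,x_n] with n > 1, and let 1 ≤ r ≤ d be integers such that the image of the integer d!/(d-r)! in K is nonzero. If T_0 is a subspace of A_1 intersecting each of r subspaces T_1, …, T_r of A_1 only in 0, then ⟨T_0^d⟩ ∩ (⟨T_1^d⟩ + ⋯ + ⟨T_r^d⟩) = 0 in A_d. -/
/-!
For a linear functional `λ` on `A`, let `D_λ` be the derivation with `D_λ xᵢ = λ(xᵢ)`. On linear
forms it acts as `λ`, so it maps `⟨T^(m+1)⟩` into `⟨T^m⟩`, and kills `⟨T^(m+1)⟩` when `λ` vanishes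
on `T`. If `T₀ ∩ T' = 0`, pick a basis `eₐ` of `T₀` and functionals `λₐ` dual to it that vanish on
`T'`; the derivation `∑ eₐ D_{λₐ}` is the identity on `T₀`, so by Euler's identity it multiplies
`⟨T₀^m⟩` by `m`. Hence an `f ∈ ⟨T₀^m⟩` killed by every `D_λ` with `λ|T' = 0` vanishes when `m ≠ 0`
in `K`. Now if `f ∈ ⟨T₀^d⟩ ∩ (⟨T₁^d⟩ + ⋯ + ⟨T_r^d⟩)` and `λ` vanishes on `T₁`, then
`D_λ f ∈ ⟨T₀^(d-1)⟩ ∩ (⟨T₂^(d-1)⟩ + ⋯ + ⟨T_r^(d-1)⟩)`, which is `0` by induction on `r`; so `f = 0`.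
The induction uses that `d, d - 1, …, d - r + 1` are nonzero in `K`.
-/

open MvPolynomial

namespace Derivation

variable {R A : Type*} [CommSemiring R] [CommSemiring A] [Algebra R A]

theorem map_mem_mul_pow_of_mem_pow_succ (D : Derivation R A A) {T U : Submodule R A}
    (hD : ∀ t ∈ T, D t ∈ U) {m : ℕ} {f : A} (hf : f ∈ T ^ (m + 1)) : D f ∈ U * T ^ m := by
  induction m generalizing f with
  | zero => simpa using hD f (by simpa using hf)
  | succ m ih =>
    rw [pow_succ] at hf
    refine Submodule.mul_induction_on hf (fun x hx t ht => ?_) (fun x y hx hy => ?_)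
    · rw [D.leibniz, smul_eq_mul, smul_eq_mul, mul_comm x, mul_comm t]
      exact add_mem (Submodule.mul_mem_mul (hD t ht) hx)
        (pow_succ T m ▸ mul_assoc U (T ^ m) T ▸ Submodule.mul_mem_mul (ih hx) ht)
    · exact D.map_add x y ▸ add_mem hx hy

theorem eq_nsmul_of_mem_pow (D : Derivation R A A) {T : Submodule R A}
    (hD : ∀ t ∈ T, D t = t) {m : ℕ} {f : A} (hf : f ∈ T ^ m) : D f = m • f := by
  induction m generalizing f with
  | zero =>
    obtain ⟨c, rfl⟩ := Submodule.mem_one.mp (pow_zero T ▸ hf)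
    simp
  | succ m ih =>
    rw [pow_succ] at hf
    refine Submodule.mul_induction_on hf (fun x hx t ht => ?_) (fun x y hx hy => ?_)
    · rw [D.leibniz, hD t ht, ih hx, smul_eq_mul, smul_eq_mul, mul_smul_comm, succ_nsmul]
      ring
    · rw [D.map_add, hx, hy, smul_add]

end Derivation

theorem Submodule.exists_projection_of_disjoint {K V : Type*} [DivisionRing K] [AddCommGroup V]
    [Module K V] {p q : Submodule K V} (hpq : Disjoint p q) :
    ∃ π : V →ₗ[K] p, (∀ x ∈ q, π x = 0) ∧ ∀ x : p, π x = x := by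
  have hinj : LinearMap.ker (q.mkQ ∘ₗ p.subtype) = ⊥ := by
    rwa [LinearMap.ker_comp, Submodule.ker_mkQ, ← Submodule.disjoint_iff_comap_eq_bot]
  obtain ⟨g, hg⟩ := (q.mkQ ∘ₗ p.subtype).exists_leftInverse_of_injective hinj
  refine ⟨g ∘ₗ q.mkQ, fun x hx => ?_, fun x => LinearMap.congr_fun hg x⟩
  simp [(Submodule.Quotient.mk_eq_zero q).mpr hx]

namespace MvPolynomial

section CommSemiring

variable {R σ : Type*} [CommSemiring R]

noncomputable def directionalDerivation (l : MvPolynomial σ R →ₗ[R] R) :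
    Derivation R (MvPolynomial σ R) (MvPolynomial σ R) :=
  mkDerivation R fun i => C (l (X i))

theorem directionalDerivation_eq_C_of_mem_homogeneousSubmodule_one
    (l : MvPolynomial σ R →ₗ[R] R) {t : MvPolynomial σ R}
    (ht : t ∈ homogeneousSubmodule σ R 1) : directionalDerivation l t = C (l t) := by
  rw [homogeneousSubmodule_one_eq_span_X] at ht
  induction ht using Submodule.span_induction with
  | mem x hx => obtain ⟨i, rfl⟩ := hx; exact mkDerivation_X _ _ _
  | zero => simp
  | add x y _ _ hx hy => rw [map_add, hx, hy, map_add, map_add]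
  | smul c x _ hx => rw [Derivation.map_smul, hx, map_smul, smul_eq_mul, C_mul, ← smul_eq_C_mul]

variable {T : Submodule R (MvPolynomial σ R)}

theorem directionalDerivation_mem_pow (hT : T ≤ homogeneousSubmodule σ R 1)
    (l : MvPolynomial σ R →ₗ[R] R) {m : ℕ} {f : MvPolynomial σ R} (hf : f ∈ T ^ (m + 1)) :
    directionalDerivation l f ∈ T ^ m := by
  refine one_mul (T ^ m) ▸ (directionalDerivation l).map_mem_mul_pow_of_mem_pow_succ
    (fun t ht => ?_) hf
  rw [directionalDerivation_eq_C_of_mem_homogeneousSubmodule_one l (hT ht), ← algebraMap_eq]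
  exact Submodule.algebraMap_mem _

theorem directionalDerivation_eq_zero_of_mem_pow (hT : T ≤ homogeneousSubmodule σ R 1)
    {l : MvPolynomial σ R →ₗ[R] R} (hl : ∀ t ∈ T, l t = 0) {m : ℕ} {f : MvPolynomial σ R}
    (hf : f ∈ T ^ (m + 1)) :
    directionalDerivation l f = 0 := by
  refine Submodule.mem_bot R |>.mp <| Submodule.bot_mul (T ^ m) ▸
    (directionalDerivation l).map_mem_mul_pow_of_mem_pow_succ (fun t ht => ?_) hf
  rw [directionalDerivation_eq_C_of_mem_homogeneousSubmodule_one l (hT ht), hl t ht, C_0]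
  exact zero_mem _

end CommSemiring

variable {K σ : Type*} [Field K] [Finite σ]

theorem eq_zero_of_forall_directionalDerivation_eq_zero
    {T₀ T' : Submodule K (MvPolynomial σ K)} (hT₀ : T₀ ≤ homogeneousSubmodule σ K 1)
    (hdisj : Disjoint T₀ T') {m : ℕ} (hm : (m : K) ≠ 0) {f : MvPolynomial σ K} (hf : f ∈ T₀ ^ m)
    (hD : ∀ l : MvPolynomial σ K →ₗ[K] K, (∀ t ∈ T', l t = 0) → directionalDerivation l f = 0) :
    f = 0 := by
  have : FiniteDimensional K T₀ := by
    have := FiniteDimensional.span_of_finite K (Set.finite_range (X : σ → MvPolynomial σ K))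
    exact Submodule.finiteDimensional_of_le (homogeneousSubmodule_one_eq_span_X (R := K) ▸ hT₀)
  obtain ⟨π, hπ, hπ₀⟩ := Submodule.exists_projection_of_disjoint hdisj
  let b := Module.finBasis K T₀
  let l a := b.coord a ∘ₗ π
  let E := ∑ a, (b a : MvPolynomial σ K) • directionalDerivation (l a)
  have hE (g : MvPolynomial σ K) :
      E g = ∑ a, (b a : MvPolynomial σ K) * directionalDerivation (l a) g := by
    rw [← Derivation.coeFnAddMonoidHom_apply, map_sum, Finset.sum_apply]
    simp [Derivation.coeFnAddMonoidHom_apply]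
  have hE₀ : ∀ t ∈ T₀, E t = t := by
    intro t ht
    have hsum := congrArg Subtype.val (b.sum_repr (π t))
    rw [hπ₀ ⟨t, ht⟩, Submodule.coe_sum] at hsum
    rw [hE]
    refine (Finset.sum_congr rfl fun a _ => ?_).trans hsum
    rw [directionalDerivation_eq_C_of_mem_homogeneousSubmodule_one _ (hT₀ ht), mul_comm,
      ← smul_eq_C_mul]
    simp [l, hπ₀ ⟨t, ht⟩]
  have hEf : E f = 0 := by
    rw [hE]
    exact Finset.sum_eq_zero fun a _ => by
      rw [hD (l a) fun t ht => by simp [l, hπ t ht], mul_zero]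
  have hmf : (m : K) • f = 0 := by
    rw [Nat.cast_smul_eq_nsmul, ← E.eq_nsmul_of_mem_pow hE₀ hf, hEf]
  exact (smul_eq_zero.mp hmf).resolve_left hm

theorem pow_inf_finset_sup_pow_eq_bot {ι : Type*}
    {T₀ : Submodule K (MvPolynomial σ K)} {T : ι → Submodule K (MvPolynomial σ K)}
    (hT₀ : T₀ ≤ homogeneousSubmodule σ K 1) (hT : ∀ j, T j ≤ homogeneousSubmodule σ K 1)
    (hdisj : ∀ j, Disjoint T₀ (T j)) (s : Finset ι) {m : ℕ}
    (hm : ((m.descFactorial s.card : ℕ) : K) ≠ 0) :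
    T₀ ^ m ⊓ s.sup (fun j => T j ^ m) = ⊥ := by
  classical
  induction s using Finset.induction_on generalizing m with
  | empty => simp
  | insert j s hj ih =>
    obtain _ | m := m
    · simp [hj] at hm
    rw [Finset.card_insert_of_notMem hj, Nat.succ_descFactorial_succ, Nat.cast_mul] at hm
    rw [eq_bot_iff]
    rintro f ⟨hf₀, hf⟩
    rw [Finset.sup_insert] at hf
    obtain ⟨g, hg, h, hh, rfl⟩ := Submodule.mem_sup.mp hf
    refine (Submodule.mem_bot K).mpr <|
      eq_zero_of_forall_directionalDerivation_eq_zero hT₀ (hdisj j) (left_ne_zero_of_mul hm) hf₀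
        fun l hl => ?_
    have hDh : directionalDerivation l h ∈ s.sup (fun i => T i ^ m) := by
      have hsup : s.sup (fun i => T i ^ (m + 1)) ≤
          (s.sup fun i => T i ^ m).comap (directionalDerivation l).toLinearMap :=
        Finset.sup_le fun i hi x hx => Finset.le_sup (f := fun i => T i ^ m) hi
          (directionalDerivation_mem_pow (hT i) l hx)
      exact hsup hh
    have hDf : directionalDerivation l (g + h) = directionalDerivation l h := by
      rw [map_add, directionalDerivation_eq_zero_of_mem_pow (hT j) hl hg, zero_add]
    exact (Submodule.mem_bot K).mp <| ih (right_ne_zero_of_mul hm) ▸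
      ⟨directionalDerivation_mem_pow hT₀ l hf₀, hDf ▸ hDh⟩

end MvPolynomial

theorem power_subspace_almost_independence_general (K : Type*) [Field K] (n d r : ℕ)
    (hrd : r ≤ d)
    (hfac : ((d.factorial / (d - r).factorial : ℕ) : K) ≠ 0)
    (T₀ : Submodule K (MvPolynomial (Fin n) K))
    (T : Fin r → Submodule K (MvPolynomial (Fin n) K))
    (hT₀ : T₀ ≤ homogeneousSubmodule (Fin n) K 1)
    (hT : ∀ j, T j ≤ homogeneousSubmodule (Fin n) K 1)
    (hmeet : ∀ j, T₀ ⊓ T j = ⊥) :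
    (T₀ ^ d) ⊓ (⨆ j, T j ^ d) = ⊥ := by
  rw [← Finset.sup_univ_eq_iSup]
  refine pow_inf_finset_sup_pow_eq_bot hT₀ hT (fun j => disjoint_iff.mpr (hmeet j)) _ ?_
  rwa [Finset.card_univ, Fintype.card_fin, Nat.descFactorial_eq_div hrd]

/-- If `d!/(d-r)! ≠ 0` in `K` and `T_0` is a subspace of `A_1` intersecting
each of `r` subspaces `T_1, …, T_r` of `A_1` only in `0`, then
`⟨T_0^d⟩ ∩ (⟨T_1^d⟩ + ⋯ + ⟨T_r^d⟩) = 0`.  Here `T ^ d` is the subspace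
spanned by all products of `d` elements of `T`. -/
theorem power_subspace_almost_independence (K : Type*) [Field K] (n d r : ℕ)
    (hn : 1 < n) (hr : 1 ≤ r) (hrd : r ≤ d)
    (hfac : ((d.factorial / (d - r).factorial : ℕ) : K) ≠ 0)
    (T₀ : Submodule K (MvPolynomial (Fin n) K))
    (T : Fin r → Submodule K (MvPolynomial (Fin n) K))
    (hT₀ : T₀ ≤ homogeneousSubmodule (Fin n) K 1)
    (hT : ∀ j, T j ≤ homogeneousSubmodule (Fin n) K 1)
    (hmeet : ∀ j, T₀ ⊓ T j = ⊥) :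
    (T₀ ^ d) ⊓ (⨆ j, T j ^ d) = ⊥ :=
  power_subspace_almost_independence_general K n d r hrd hfac T₀ T hT₀ hT hmeet
end

section
/- Let K be a field, A = K[x_1,…,x_n] with n > 1, let d > 1, and let U_1 and U_2 be subspaces of A_1 with U_1 ∩ U_2 = 0. Then: (i) ⟨A_{d-1}U_1⟩ ∩ ⟨A_{d-1}U_2⟩ = ⟨A_{d-2}U_1U_2⟩; (ii) ⟨(U_1 + U_2)^d⟩ equals the direct sum over k = 0, …, d of the subspaces ⟨U_1^k U_2^{d-k}⟩; and (iii) ⟨U_1^d⟩ ∩ ⟨A_{d-1}U_2⟩ = 0. -/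
/-!
After a linear change of coordinates, i.e. an automorphism of `A` induced by a linear automorphism
of `A₁`, which preserves every `A_m`, the subspaces `U₁` and `U₂` are spanned by two disjoint sets
of variables `b₁` and `b₂`. Every space in the statement is then spanned by monomials, and the
claims become statements about exponent vectors: a monomial of degree `d` divisible by a variable
of `b₁` and by a variable of `b₂` is divisible by their product; the pieces `U₁^k U₂^(d-k)` are
told apart by the degree in the variables of `b₁`; and no monomial in the variables of `b₁` is
divisible by a variable of `b₂`. The equality in (ii) needs no coordinates: it is the binomial
formula in the idempotent semiring of submodules.
-/

open MvPolynomial Pointwise Finsupp Function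

universe u v

theorem map_eq_nsmul_of_mem_nsmul {M N F : Type*} [AddMonoid M] [AddMonoid N] [FunLike F M N]
    [AddMonoidHomClass F M N] (f : F) {S : Set M} {c : N} (h : ∀ s ∈ S, f s = c) {k : ℕ}
    {x : M} (hx : x ∈ k • S) : f x = k • c := by
  induction k generalizing x with
  | zero =>
    rw [zero_nsmul, Set.mem_zero] at hx
    rw [hx, map_zero, zero_nsmul]
  | succ k ih =>
    obtain ⟨y, hy, s, hs, rfl⟩ := Set.mem_add.1 (succ_nsmul S k ▸ hx)
    rw [map_add, ih hy, h s hs, succ_nsmul]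

theorem Module.Basis.exists_span_image_eq_of_disjoint {K : Type*} {V : Type u} [DivisionRing K]
    [AddCommGroup V] [Module K V] {U₁ U₂ : Submodule K V} (h : Disjoint U₁ U₂) :
    ∃ (ι : Type u) (B : Basis ι K V) (b₁ b₂ : Set ι), Disjoint b₁ b₂ ∧
      Submodule.span K (B '' b₁) = U₁ ∧ Submodule.span K (B '' b₂) = U₂ := by
  obtain ⟨s₁, hs₁U, hs₁span, hs₁⟩ := exists_linearIndependent K (U₁ : Set V)
  obtain ⟨s₂, hs₂U, hs₂span, hs₂⟩ := exists_linearIndependent K (U₂ : Set V)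
  rw [Submodule.span_eq] at hs₁span hs₂span
  have hs : LinearIndepOn K id (s₁ ∪ s₂) :=
    LinearIndepOn.id_union hs₁ hs₂ (by rw [hs₁span, hs₂span]; exact h)
  have hs₁₂ : Disjoint s₁ s₂ := by
    refine Set.disjoint_left.2 fun x hx₁ hx₂ => ?_
    have hx0 : x = 0 := (Submodule.disjoint_def.1 h) x (hs₁U hx₁) (hs₂U hx₂)
    exact LinearIndepOn.zero_notMem_image (v := id) (s := s₁) hs₁ ⟨x, hx₁, hx0⟩
  have hspan : ∀ s ⊆ s₁ ∪ s₂, Submodule.span K (Basis.extend hs '' (Subtype.val ⁻¹' s)) =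
      Submodule.span K s := fun s hsub => by
    rw [Basis.coe_extend, Subtype.image_preimage_coe,
      Set.inter_eq_right.2 (hsub.trans (hs.subset_extend _))]
  exact ⟨_, Basis.extend hs, Subtype.val ⁻¹' s₁, Subtype.val ⁻¹' s₂, hs₁₂.preimage _,
    (hspan s₁ Set.subset_union_left).trans hs₁span,
    (hspan s₂ Set.subset_union_right).trans hs₂span⟩

theorem Submodule.sup_pow_eq_iSup_pow_mul_pow {R A : Type*} [CommSemiring R] [CommSemiring A]
    [Algebra R A] (M N : Submodule R A) (d : ℕ) :
    (M ⊔ N) ^ d = ⨆ k : Fin (d + 1), M ^ (k : ℕ) * N ^ (d - k) := by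
  rw [← Submodule.add_eq_sup, add_pow, Finset.sum_range, ← Finset.sup_univ_eq_iSup]
  simp only [natCast_eq_one (Nat.choose_pos (Nat.lt_succ_iff.1 (Fin.is_lt _))).ne', mul_one]
  -- a finite sum of submodules is by definition their `Finset.sup`
  rfl

namespace Finsupp

variable {σ : Type*} {s b : Set σ} {k : ℕ} {x : σ →₀ ℕ}

theorem weight_indicator_eq_of_mem_nsmul (hs : s ⊆ b) (hx : x ∈ k • (single · 1) '' s) :
    weight (b.indicator (1 : σ → ℕ)) x = k := by
  simpa using map_eq_nsmul_of_mem_nsmul (weight (b.indicator (1 : σ → ℕ))) (c := 1)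
    (by rintro - ⟨i, hi, rfl⟩; simp [weight_single, hs hi]) hx

theorem weight_indicator_eq_zero_of_mem_nsmul (hs : Disjoint s b)
    (hx : x ∈ k • (single · 1) '' s) : weight (b.indicator (1 : σ → ℕ)) x = 0 := by
  simpa using map_eq_nsmul_of_mem_nsmul (weight (b.indicator (1 : σ → ℕ))) (c := 0)
    (by rintro - ⟨i, hi, rfl⟩; simp [weight_single, hs.notMem_of_mem_left hi]) hx

theorem disjoint_nsmul_add_nsmul {b₁ b₂ : Set σ} (hb : Disjoint b₁ b₂) {k l p q : ℕ}
    (hkl : k ≠ l) :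
    Disjoint (k • (single · 1) '' b₁ + p • (single · 1) '' b₂)
      (l • (single · 1) '' b₁ + q • (single · 1) '' b₂) := by
  have key : ∀ {k p : ℕ} {x}, x ∈ k • (single · 1) '' b₁ + p • (single · 1) '' b₂ →
      weight (b₁.indicator (1 : σ → ℕ)) x = k := by
    rintro k p - ⟨y, hy, z, hz, rfl⟩
    rw [map_add, weight_indicator_eq_of_mem_nsmul le_rfl hy,
      weight_indicator_eq_zero_of_mem_nsmul hb.symm hz, add_zero]
  exact Set.disjoint_left.2 fun x hx hx' => hkl ((key hx).symm.trans (key hx'))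

theorem disjoint_nsmul_add_image_single_one {b₁ b₂ : Set σ} (hb : Disjoint b₁ b₂) (d : ℕ)
    (T : Set (σ →₀ ℕ)) :
    Disjoint (d • (single · 1) '' b₁) (T + (single · 1) '' b₂) := by
  refine Set.disjoint_left.2 fun x hx ⟨t, _, _, ⟨j, hj, rfl⟩, hx'⟩ => ?_
  have := weight_indicator_eq_zero_of_mem_nsmul hb hx
  simp [← hx', weight_single, hj] at this

theorem exists_eq_add_single_one_of_ne_zero {μ : σ →₀ ℕ} {i : σ} (h : μ i ≠ 0) :
    ∃ ν, μ = ν + single i 1 :=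
  le_iff_exists_add'.1 (single_le_iff.2 (Nat.one_le_iff_ne_zero.2 h))

theorem setOf_degree_eq_add_image_single_one (m : ℕ) (b : Set σ) :
    {ν : σ →₀ ℕ | ν.degree = m} + (single · 1) '' b =
      {μ | μ.degree = m + 1 ∧ ∃ i ∈ b, μ i ≠ 0} := by
  ext μ
  simp only [Set.mem_add, Set.mem_ofPred_eq, Set.exists_mem_image]
  constructor
  · rintro ⟨ν, rfl, i, hi, rfl⟩
    exact ⟨by simp, i, hi, by simp⟩
  · rintro ⟨hμ, i, hi, hμi⟩
    obtain ⟨ν, rfl⟩ := exists_eq_add_single_one_of_ne_zero hμi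
    exact ⟨ν, by simpa using hμ, i, hi, rfl⟩

theorem setOf_degree_eq_add_image_single_one_inter {b₁ b₂ : Set σ} (hb : Disjoint b₁ b₂)
    (m : ℕ) :
    ({ν : σ →₀ ℕ | ν.degree = m + 1} + (single · 1) '' b₁) ∩
        ({ν | ν.degree = m + 1} + (single · 1) '' b₂) =
      {ν | ν.degree = m} + (single · 1) '' b₁ + (single · 1) '' b₂ := by
  simp only [setOf_degree_eq_add_image_single_one]
  ext μ
  simp only [Set.mem_inter_iff, Set.mem_add, Set.mem_ofPred_eq, Set.exists_mem_image]
  constructor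
  · rintro ⟨⟨hμ, i, hi, hμi⟩, -, j, hj, hμj⟩
    obtain ⟨ν, rfl⟩ := exists_eq_add_single_one_of_ne_zero hμj
    have hij : j ≠ i := fun h => hb.ne_of_mem hi hj h.symm
    refine ⟨ν, ⟨by simpa using hμ, i, hi, by simpa [single_apply, hij] using hμi⟩, j, hj, rfl⟩
  · rintro ⟨ν, ⟨hν, i, hi, hνi⟩, j, hj, rfl⟩
    have hdeg : (ν + single j 1).degree = m + 1 + 1 := by simp [hν]
    exact ⟨⟨hdeg, i, hi, by simp [hνi]⟩, hdeg, j, hj, by simp⟩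

end Finsupp

namespace MvPolynomial

variable {σ R : Type*} [CommSemiring R]

theorem restrictSupport_inter (S T : Set (σ →₀ ℕ)) :
    restrictSupport R (S ∩ T) = restrictSupport R S ⊓ restrictSupport R T := by
  ext p
  simp only [Submodule.mem_inf, mem_restrictSupport_iff, Set.subset_inter_iff]

theorem disjoint_restrictSupport {S T : Set (σ →₀ ℕ)} (h : Disjoint S T) :
    Disjoint (restrictSupport R S) (restrictSupport R T) := by
  refine Submodule.disjoint_def.2 fun p hS hT => ?_
  simpa using disjoint_self.1 (h.mono hS hT)

theorem iSupIndep_restrictSupport {ι : Type*} {S : ι → Set (σ →₀ ℕ)}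
    (h : Pairwise (Disjoint on S)) : iSupIndep fun i => restrictSupport R (S i) := by
  refine iSupIndep_def.2 fun i => ?_
  have hle : ⨆ (j) (_ : j ≠ i), restrictSupport R (S j) ≤
      restrictSupport R (⋃ (j) (_ : j ≠ i), S j) :=
    iSup₂_le fun j hj => restrictSupport_mono R (Set.subset_biUnion_of_mem (u := S) hj)
  have hd : Disjoint (S i) (⋃ (j) (_ : j ≠ i), S j) :=
    Set.disjoint_iUnion₂_right.2 fun j hj => h hj.symm
  exact (disjoint_restrictSupport hd).mono_right hle

theorem span_X_image_eq_restrictSupport (b : Set σ) :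
    Submodule.span R (X '' b : Set (MvPolynomial σ R)) = restrictSupport R ((single · 1) '' b) := by
  rw [restrictSupport_eq_span, Set.image_image]
  rfl

theorem span_X_image_pow (b : Set σ) (k : ℕ) :
    Submodule.span R (X '' b : Set (MvPolynomial σ R)) ^ k =
      restrictSupport R (k • (single · 1) '' b) := by
  rw [span_X_image_eq_restrictSupport, restrictSupport_nsmul]

theorem homogeneousSubmodule_eq_restrictSupport (m : ℕ) :
    homogeneousSubmodule σ R m = restrictSupport R {μ | μ.degree = m} :=
  homogeneousSubmodule_eq_finsupp_supported σ R m

variable {b₁ b₂ : Set σ}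

theorem homogeneousSubmodule_mul_span_X_image_inf (hb : Disjoint b₁ b₂) (m : ℕ) :
    homogeneousSubmodule σ R (m + 1) * Submodule.span R (X '' b₁) ⊓
        homogeneousSubmodule σ R (m + 1) * Submodule.span R (X '' b₂) =
      homogeneousSubmodule σ R m * Submodule.span R (X '' b₁) * Submodule.span R (X '' b₂) := by
  simp only [homogeneousSubmodule_eq_restrictSupport, span_X_image_eq_restrictSupport,
    ← restrictSupport_add, ← restrictSupport_inter, setOf_degree_eq_add_image_single_one_inter hb]

theorem iSupIndep_span_X_image_pow_mul_pow (hb : Disjoint b₁ b₂) (d : ℕ) :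
    iSupIndep fun k : Fin (d + 1) =>
      Submodule.span R (X '' b₁ : Set (MvPolynomial σ R)) ^ (k : ℕ) *
        Submodule.span R (X '' b₂) ^ (d - k) := by
  simp only [span_X_image_pow, ← restrictSupport_add]
  exact iSupIndep_restrictSupport fun k l hkl => disjoint_nsmul_add_nsmul hb (Fin.val_ne_of_ne hkl)

theorem span_X_image_pow_inf_homogeneousSubmodule_mul_span_X_image (hb : Disjoint b₁ b₂)
    (d m : ℕ) :
    Submodule.span R (X '' b₁ : Set (MvPolynomial σ R)) ^ d ⊓
        homogeneousSubmodule σ R m * Submodule.span R (X '' b₂) = ⊥ := by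
  rw [span_X_image_pow, homogeneousSubmodule_eq_restrictSupport, span_X_image_eq_restrictSupport,
    ← restrictSupport_add]
  exact (disjoint_restrictSupport (disjoint_nsmul_add_image_single_one hb d _)).eq_bot

section LinearSubst

variable {τ : Type*}

variable (σ R) in
noncomputable def basisHomogeneousSubmoduleOne : Module.Basis σ R (homogeneousSubmodule σ R 1) :=
  .mk (v := fun i => ⟨X i, isHomogeneous_X R i⟩)
    (.of_comp (homogeneousSubmodule σ R 1).subtype (linearIndependent_X σ R))
    (by
      refine (Submodule.map_injective_of_injective (Submodule.injective_subtype _) ?_).ge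
      rw [Submodule.map_span, ← Set.range_comp, Submodule.map_top, Submodule.range_subtype]
      exact homogeneousSubmodule_one_eq_span_X.symm)

theorem basisHomogeneousSubmoduleOne_apply (i : σ) :
    (basisHomogeneousSubmoduleOne σ R i : MvPolynomial σ R) = X i := by
  simp [basisHomogeneousSubmoduleOne]

noncomputable def linearSubst (L : homogeneousSubmodule σ R 1 →ₗ[R] homogeneousSubmodule τ R 1) :
    MvPolynomial σ R →ₐ[R] MvPolynomial τ R :=
  aeval fun i => (L (basisHomogeneousSubmoduleOne σ R i) : MvPolynomial τ R)

variable (L : homogeneousSubmodule σ R 1 →ₗ[R] homogeneousSubmodule τ R 1)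

theorem linearSubst_X (i : σ) : linearSubst L (X i) = L (basisHomogeneousSubmoduleOne σ R i) :=
  aeval_X _ _

theorem linearSubst_comp_subtype :
    (linearSubst L).toLinearMap ∘ₗ (homogeneousSubmodule σ R 1).subtype =
      (homogeneousSubmodule τ R 1).subtype ∘ₗ L :=
  (basisHomogeneousSubmoduleOne σ R).ext fun i => by
    simp [basisHomogeneousSubmoduleOne_apply, linearSubst_X]

theorem linearSubst_coe (p : homogeneousSubmodule σ R 1) : linearSubst L p = L p :=
  LinearMap.congr_fun (linearSubst_comp_subtype L) p

theorem linearSubst_comp {υ : Type*}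
    (L' : homogeneousSubmodule τ R 1 →ₗ[R] homogeneousSubmodule υ R 1) :
    (linearSubst L').comp (linearSubst L) = linearSubst (L' ∘ₗ L) :=
  algHom_ext fun i => by
    rw [AlgHom.comp_apply, linearSubst_X, linearSubst_coe, linearSubst_X]
    rfl

theorem linearSubst_id : linearSubst (.id : homogeneousSubmodule σ R 1 →ₗ[R] _) = AlgHom.id R _ :=
  algHom_ext fun i => by simp [linearSubst_X, basisHomogeneousSubmoduleOne_apply]

theorem map_linearSubst_homogeneousSubmodule (hL : Function.Surjective L) (m : ℕ) :
    Submodule.map (linearSubst L).toLinearMap (homogeneousSubmodule σ R m) =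
      homogeneousSubmodule τ R m := by
  have h₁ : Submodule.map (linearSubst L).toLinearMap (homogeneousSubmodule σ R 1) =
      homogeneousSubmodule τ R 1 := by
    rw [← (homogeneousSubmodule σ R 1).range_subtype, ← LinearMap.range_comp,
      linearSubst_comp_subtype, LinearMap.range_comp, LinearMap.range_eq_top.2 hL,
      Submodule.map_top, Submodule.range_subtype]
  rw [← homogeneousSubmodule_one_pow, Submodule.map_pow, h₁, homogeneousSubmodule_one_pow]

theorem linearSubst_injective (e : homogeneousSubmodule σ R 1 ≃ₗ[R] homogeneousSubmodule τ R 1) :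
    Function.Injective (linearSubst e.toLinearMap) :=
  Function.LeftInverse.injective (g := linearSubst e.symm.toLinearMap) fun p => by
    rw [← AlgHom.comp_apply, linearSubst_comp, LinearEquiv.symm_comp, linearSubst_id,
      AlgHom.id_apply]

end LinearSubst

theorem exists_injective_algHom_map_span_X_image {σ : Type u} {K : Type v} [Field K]
    {U₁ U₂ : Submodule K (MvPolynomial σ K)} (hU₁ : U₁ ≤ homogeneousSubmodule σ K 1)
    (hU₂ : U₂ ≤ homogeneousSubmodule σ K 1) (h : Disjoint U₁ U₂) :
    ∃ (ι : Type (max u v)) (φ : MvPolynomial ι K →ₐ[K] MvPolynomial σ K) (b₁ b₂ : Set ι),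
      Function.Injective φ ∧ Disjoint b₁ b₂ ∧
      (∀ m, Submodule.map φ.toLinearMap (homogeneousSubmodule ι K m) =
        homogeneousSubmodule σ K m) ∧
      Submodule.map φ.toLinearMap (Submodule.span K (X '' b₁)) = U₁ ∧
      Submodule.map φ.toLinearMap (Submodule.span K (X '' b₂)) = U₂ := by
  set H := homogeneousSubmodule σ K 1
  have hdisj : Disjoint (U₁.comap H.subtype) (U₂.comap H.subtype) :=
    Submodule.disjoint_def.2 fun x h₁ h₂ => Subtype.ext (Submodule.disjoint_def.1 h _ h₁ h₂)
  obtain ⟨ι, B, b₁, b₂, hb, h₁, h₂⟩ := Module.Basis.exists_span_image_eq_of_disjoint hdisj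
  set e := (basisHomogeneousSubmoduleOne ι K).equiv B (Equiv.refl ι)
  have hX : ∀ i, linearSubst e.toLinearMap (X i) = B i := fun i => by
    rw [linearSubst_X, LinearEquiv.coe_coe, Module.Basis.equiv_apply, Equiv.refl_apply]
  have hmap : ∀ {b : Set ι} {U : Submodule K (MvPolynomial σ K)}, U ≤ H →
      Submodule.span K (B '' b) = U.comap H.subtype →
      Submodule.map (linearSubst e.toLinearMap).toLinearMap (Submodule.span K (X '' b)) = U := by
    intro b U hU hb
    calc Submodule.map (linearSubst e.toLinearMap).toLinearMap (Submodule.span K (X '' b))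
        = Submodule.map H.subtype (Submodule.span K (B '' b)) := by
          simp only [Submodule.map_span, Set.image_image, AlgHom.toLinearMap_apply, hX]
          rfl
      _ = U := by rw [hb, Submodule.map_comap_subtype, inf_eq_right.2 hU]
  exact ⟨ι, linearSubst e.toLinearMap, b₁, b₂, linearSubst_injective e, hb,
    map_linearSubst_homogeneousSubmodule _ e.surjective, hmap hU₁ h₁, hmap hU₂ h₂⟩

end MvPolynomial

theorem power_subspace_calculus_general (K : Type*) [Field K] (n d : ℕ)
    (hd : 1 < d)
    (U₁ U₂ : Submodule K (MvPolynomial (Fin n) K))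
    (hU₁ : U₁ ≤ homogeneousSubmodule (Fin n) K 1)
    (hU₂ : U₂ ≤ homogeneousSubmodule (Fin n) K 1)
    (hmeet : U₁ ⊓ U₂ = ⊥) :
    ((homogeneousSubmodule (Fin n) K (d - 1) * U₁) ⊓
        (homogeneousSubmodule (Fin n) K (d - 1) * U₂) =
      homogeneousSubmodule (Fin n) K (d - 2) * U₁ * U₂) ∧
    ((U₁ ⊔ U₂) ^ d = ⨆ k : Fin (d + 1), U₁ ^ (k : ℕ) * U₂ ^ (d - (k : ℕ))) ∧
    (iSupIndep fun k : Fin (d + 1) => U₁ ^ (k : ℕ) * U₂ ^ (d - (k : ℕ))) ∧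
    ((U₁ ^ d) ⊓ (homogeneousSubmodule (Fin n) K (d - 1) * U₂) = ⊥) := by
  obtain ⟨m, rfl⟩ : ∃ m, d = m + 2 := ⟨d - 2, by omega⟩
  obtain ⟨ι, φ, b₁, b₂, hφ, hb, hhom, rfl, rfl⟩ :=
    exists_injective_algHom_map_span_X_image hU₁ hU₂ (disjoint_iff.2 hmeet)
  rw [show m + 2 - 1 = m + 1 from rfl, Nat.add_sub_cancel]
  refine ⟨?_, Submodule.sup_pow_eq_iSup_pow_mul_pow _ _ _, ?_, ?_⟩
  · simp only [← hhom, ← Submodule.map_mul, ← Submodule.map_inf φ.toLinearMap hφ,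
      homogeneousSubmodule_mul_span_X_image_inf hb m]
  · simp only [← Submodule.map_pow, ← Submodule.map_mul]
    exact LinearMap.iSupIndep_map _ hφ (iSupIndep_span_X_image_pow_mul_pow hb _)
  · simp only [← hhom, ← Submodule.map_pow, ← Submodule.map_mul,
      ← Submodule.map_inf φ.toLinearMap hφ,
      span_X_image_pow_inf_homogeneousSubmodule_mul_span_X_image hb, Submodule.map_bot]

/-- For subspaces `U_1, U_2` of `A_1` with `U_1 ∩ U_2 = 0` and `d > 1`:
(i) `⟨A_{d-1}U_1⟩ ∩ ⟨A_{d-1}U_2⟩ = ⟨A_{d-2}U_1U_2⟩`;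
(ii) `⟨(U_1+U_2)^d⟩` is the direct sum of the `⟨U_1^k U_2^{d-k}⟩`, `0 ≤ k ≤ d`;
(iii) `⟨U_1^d⟩ ∩ ⟨A_{d-1}U_2⟩ = 0`.
Products and powers of submodules denote the spans of the sets of products. -/
theorem power_subspace_calculus (K : Type*) [Field K] (n d : ℕ)
    (hn : 1 < n) (hd : 1 < d)
    (U₁ U₂ : Submodule K (MvPolynomial (Fin n) K))
    (hU₁ : U₁ ≤ homogeneousSubmodule (Fin n) K 1)
    (hU₂ : U₂ ≤ homogeneousSubmodule (Fin n) K 1)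
    (hmeet : U₁ ⊓ U₂ = ⊥) :
    ((homogeneousSubmodule (Fin n) K (d - 1) * U₁) ⊓
        (homogeneousSubmodule (Fin n) K (d - 1) * U₂) =
      homogeneousSubmodule (Fin n) K (d - 2) * U₁ * U₂) ∧
    ((U₁ ⊔ U₂) ^ d = ⨆ k : Fin (d + 1), U₁ ^ (k : ℕ) * U₂ ^ (d - (k : ℕ))) ∧
    (iSupIndep fun k : Fin (d + 1) => U₁ ^ (k : ℕ) * U₂ ^ (d - (k : ℕ))) ∧
    ((U₁ ^ d) ⊓ (homogeneousSubmodule (Fin n) K (d - 1) * U₂) = ⊥) :=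
  power_subspace_calculus_general K n d hd U₁ U₂ hU₁ hU₂ hmeet
end

section
/- Let K be a field, A = K[x_1,…,x_n] with n > 1, and let d ≥ 1 be an integer. For any subspaces B and C of A_1, ⟨B^d⟩ ∩ ⟨C^d⟩ = ⟨(B ∩ C)^d⟩ in A_d. -/
open MvPolynomial

/-
Let `W = B ∩ C`. Choose a complement `C'` of `W` in `C`; it meets `B` trivially, so it lies in a
complement `D` of `B`. The projection `q` onto `B` along `D` fixes `B` and maps `C = W ⊕ C'` onto
`W`. Since `A` is free on `x_1, …, x_n`, `q` extends to an algebra endomorphism `Φ` of `A` that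
agrees with `q` on `A_1`. Then `Φ` fixes `⟨B^d⟩` pointwise and maps `⟨C^d⟩` into `⟨W^d⟩`, so
every element of `⟨B^d⟩ ∩ ⟨C^d⟩` equals its own image, which lies in `⟨W^d⟩`.
-/

theorem Submodule.exists_linearMap_eqOn_and_map_le_inf {K V : Type*} [DivisionRing K]
    [AddCommGroup V] [Module K V] (B C : Submodule K V) :
    ∃ q : V →ₗ[K] V, Set.EqOn q id B ∧ C.map q ≤ B ⊓ C := by
  obtain ⟨C', hdisj, hsup⟩ :=
    IsModularLattice.exists_disjoint_and_sup_eq (inf_le_right : B ⊓ C ≤ C)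
  have hBC' : Disjoint B C' := by
    rw [disjoint_iff, ← inf_eq_right.mpr (le_sup_right.trans hsup.le), ← inf_assoc]
    exact hdisj.eq_bot
  obtain ⟨D, hC'D, hDB⟩ := hBC'.symm.exists_isCompl
  refine ⟨B.projection D hDB.symm, fun b hb => projection_apply_of_mem_left _ hb, ?_⟩
  rintro _ ⟨c, hc, rfl⟩
  rw [← hsup] at hc
  obtain ⟨w, hw, c', hc', rfl⟩ := mem_sup.mp hc
  rw [map_add, projection_apply_of_mem_left _ hw.1,
    projection_apply_of_mem_right _ (hC'D hc'), add_zero]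
  exact hw

theorem Subalgebra.pow_le_toSubmodule {R A : Type*} [CommSemiring R] [Semiring A] [Algebra R A]
    {S : Subalgebra R A} {M : Submodule R A} (h : M ≤ S.toSubmodule) (d : ℕ) :
    M ^ d ≤ S.toSubmodule := by
  induction d with
  | zero => exact Submodule.one_le.mpr S.one_mem
  | succ d ih =>
    rw [pow_succ]
    exact (mul_le_mul' ih h).trans S.isIdempotentElem_toSubmodule.le

theorem Submodule.pow_inf_pow_le_of_algHom {R A : Type*} [CommSemiring R] [Semiring A]
    [Algebra R A] (Φ : A →ₐ[R] A) {B C W : Submodule R A} (hB : Set.EqOn Φ id B)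
    (hC : C.map Φ.toLinearMap ≤ W) (d : ℕ) :
    B ^ d ⊓ C ^ d ≤ W ^ d := by
  rintro z ⟨hzB, hzC⟩
  have hfix : Φ z = z :=
    Subalgebra.pow_le_toSubmodule (S := AlgHom.equalizer Φ (AlgHom.id R A)) hB d hzB
  have hmap : Φ z ∈ C.map Φ.toLinearMap ^ d := by
    rw [← Submodule.map_pow]
    exact ⟨z, hzC, rfl⟩
  exact hfix ▸ pow_le_pow_left' hC d hmap

theorem MvPolynomial.eqOn_aeval_homogeneousSubmodule_one {σ R : Type*} [CommSemiring R]
    (q : MvPolynomial σ R →ₗ[R] MvPolynomial σ R) :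
    Set.EqOn (aeval fun i => q (X i)) q (homogeneousSubmodule σ R 1) := by
  rw [homogeneousSubmodule_one_eq_span_X]
  refine LinearMap.eqOn_span (f := (aeval fun i => q (X i)).toLinearMap) ?_
  rintro _ ⟨i, rfl⟩
  exact aeval_X _ i

theorem power_subspace_inter_general (K : Type*) [Field K] (n d : ℕ)
    (B C : Submodule K (MvPolynomial (Fin n) K))
    (hB : B ≤ homogeneousSubmodule (Fin n) K 1)
    (hC : C ≤ homogeneousSubmodule (Fin n) K 1) :
    (B ^ d) ⊓ (C ^ d) = (B ⊓ C) ^ d := by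
  refine le_antisymm ?_
    (le_inf (pow_le_pow_left' inf_le_left d) (pow_le_pow_left' inf_le_right d))
  obtain ⟨q, hqB, hqC⟩ := B.exists_linearMap_eqOn_and_map_le_inf C
  have hΦ := eqOn_aeval_homogeneousSubmodule_one q
  refine Submodule.pow_inf_pow_le_of_algHom (aeval fun i => q (X i))
    (fun b hb => (hΦ (hB hb)).trans (hqB hb)) ?_ d
  rintro _ ⟨c, hc, rfl⟩
  rw [AlgHom.toLinearMap_apply, hΦ (hC hc)]
  exact hqC ⟨c, hc, rfl⟩

/-- For any subspaces `B` and `C` of `A_1` and `d ≥ 1`,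
`⟨B^d⟩ ∩ ⟨C^d⟩ = ⟨(B ∩ C)^d⟩`, where `T ^ d` denotes the span of all
products of `d` elements of `T`. -/
theorem power_subspace_inter (K : Type*) [Field K] (n d : ℕ)
    (hn : 1 < n) (hd : 1 ≤ d)
    (B C : Submodule K (MvPolynomial (Fin n) K))
    (hB : B ≤ homogeneousSubmodule (Fin n) K 1)
    (hC : C ≤ homogeneousSubmodule (Fin n) K 1) :
    (B ^ d) ⊓ (C ^ d) = (B ⊓ C) ^ d :=
  power_subspace_inter_general K n d B C hB hC
end

section
/- Let K be a field, A = K[x_1,…,x_n] with n > 1, and d ≥ 2. Consider the set 𝒟 = {A_{d-1}y : 0 ≠ y ∈ A_1} of subspaces of A_d, parameterized by the 1-spaces of A_1. If y_1, …, y_j are nonzero elements of A_1 spanning pairwise distinct 1-spaces and 1 ≤ j ≤ d, then (A_{d-1}y_1) ∩ (A_{d-1}y_2) ∩ ⋯ ∩ (A_{d-1}y_j) = A_{d-j}·(y_1 y_2 ⋯ y_j), which has dimension binom(n+d-j-1, d-j); moreover the intersection of any d+1 distinct members of 𝒟 is 0. Hence 𝒟 is a generalized dual arc of A_d with vector dimensions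 (binom(n+d-1,d), binom(n+d-2,d-1), …, binom(n,1) = n, 1). -/
open MvPolynomial

namespace DualArcAux

variable {K : Type*} [Field K] {σ : Type*}

lemma totalDegree_eq_sup (p : MvPolynomial σ K) :
    p.totalDegree = p.support.sup Finsupp.degree := rfl

lemma comp_top_ne_zero {p : MvPolynomial σ K} (hp : p ≠ 0) :
    homogeneousComponent p.totalDegree p ≠ 0 := by
  obtain ⟨d, hd, he⟩ := Finset.exists_mem_eq_sup p.support (support_nonempty.mpr hp)
    Finsupp.degree
  rw [totalDegree_eq_sup] at *
  intro h
  have h2 : coeff d (homogeneousComponent (p.support.sup Finsupp.degree) p) = coeff d p := by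
    rw [coeff_homogeneousComponent, if_pos he.symm]
  rw [h, coeff_zero] at h2
  exact mem_support_iff.mp hd h2.symm

/-- the bottom degree of a nonzero polynomial -/
noncomputable def bot (p : MvPolynomial σ K) (hp : p.support.Nonempty) : ℕ :=
  p.support.inf' hp Finsupp.degree

lemma comp_bot_ne_zero {p : MvPolynomial σ K} (hp : p.support.Nonempty) :
    homogeneousComponent (bot p hp) p ≠ 0 := by
  obtain ⟨d, hd, he⟩ := Finset.exists_mem_eq_inf' hp Finsupp.degree
  intro h
  have h2 : coeff d (homogeneousComponent (bot p hp) p) = coeff d p := by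
    rw [coeff_homogeneousComponent, if_pos (show d.degree = bot p hp from he.symm)]
  rw [h, coeff_zero] at h2
  exact mem_support_iff.mp hd h2.symm

lemma comp_eq_zero_of_lt_bot {p : MvPolynomial σ K} (hp : p.support.Nonempty) {i : ℕ}
    (h : i < bot p hp) : homogeneousComponent i p = 0 := by
  apply homogeneousComponent_eq_zero'
  intro d hd
  exact ((h.trans_le (Finset.inf'_le _ hd))).ne'

lemma bot_le_totalDegree {p : MvPolynomial σ K} (hp : p.support.Nonempty) :
    bot p hp ≤ p.totalDegree := by
  obtain ⟨d, hd⟩ := hp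
  exact (Finset.inf'_le _ hd).trans (Finset.le_sup hd)


lemma comp_mul_eq {a b : MvPolynomial σ K} {s t : ℕ}
    (hs : s ≤ a.totalDegree) (ht : t ≤ b.totalDegree)
    (h : ∀ i k, i + k = s + t → ¬(i = s ∧ k = t) →
      homogeneousComponent i a * homogeneousComponent k b = 0) :
    homogeneousComponent (s + t) (a * b) =
      homogeneousComponent s a * homogeneousComponent t b := by
  have hab : a * b =
      ∑ i ∈ Finset.range (a.totalDegree + 1), ∑ k ∈ Finset.range (b.totalDegree + 1),
        homogeneousComponent i a * homogeneousComponent k b := by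
    rw [← Finset.sum_mul_sum, a.sum_homogeneousComponent, b.sum_homogeneousComponent]
  rw [hab, map_sum]
  have step : ∀ i ∈ Finset.range (a.totalDegree + 1),
      (homogeneousComponent (s + t))
        (∑ k ∈ Finset.range (b.totalDegree + 1),
          homogeneousComponent i a * homogeneousComponent k b) =
      ∑ k ∈ Finset.range (b.totalDegree + 1),
        (if i = s ∧ k = t then homogeneousComponent s a * homogeneousComponent t b else 0) := by
    intro i _
    rw [map_sum]
    refine Finset.sum_congr rfl fun k _ => ?_
    have hmem : homogeneousComponent i a * homogeneousComponent k b ∈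
        homogeneousSubmodule σ K (i + k) :=
      (homogeneousComponent_isHomogeneous i a).mul (homogeneousComponent_isHomogeneous k b)
    rw [homogeneousComponent_of_mem hmem]
    by_cases h1 : i = s ∧ k = t
    · obtain ⟨rfl, rfl⟩ := h1
      simp
    · rw [if_neg h1]
      by_cases h2 : s + t = i + k
      · rw [if_pos h2]
        exact h i k h2.symm h1
      · rw [if_neg h2]
  rw [Finset.sum_congr rfl step]
  have step2 : ∀ i ∈ Finset.range (a.totalDegree + 1),
      (∑ k ∈ Finset.range (b.totalDegree + 1),
        (if i = s ∧ k = t then homogeneousComponent s a * homogeneousComponent t b else 0)) =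
      (if i = s then homogeneousComponent s a * homogeneousComponent t b else 0) := by
    intro i _
    by_cases his : i = s
    · subst his
      simp only [true_and, if_true]
      rw [Finset.sum_ite_eq' (Finset.range _) t]
      rw [if_pos (Finset.mem_range.mpr (Nat.lt_succ_of_le ht))]
    · simp [his]
  rw [Finset.sum_congr rfl step2, Finset.sum_ite_eq' (Finset.range _) s]
  rw [if_pos (Finset.mem_range.mpr (Nat.lt_succ_of_le hs))]


lemma isHomogeneous_of_mul {a b : MvPolynomial σ K} {e : ℕ}
    (h : (a * b).IsHomogeneous e) (ha : a ≠ 0) (hb : b ≠ 0) :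
    a.IsHomogeneous a.totalDegree ∧ b.IsHomogeneous b.totalDegree ∧
      a.totalDegree + b.totalDegree = e := by
  have hsa : a.support.Nonempty := support_nonempty.mpr ha
  have hsb : b.support.Nonempty := support_nonempty.mpr hb
  have htop : a.totalDegree + b.totalDegree = e := by
    by_contra hne
    have h0 : homogeneousComponent (a.totalDegree + b.totalDegree) (a * b) = 0 := by
      rw [homogeneousComponent_of_mem ((mem_homogeneousSubmodule _ _).mpr h), if_neg hne]
    rw [comp_mul_eq le_rfl le_rfl (fun i k hik h1 => ?_)] at h0
    · exact mul_ne_zero (comp_top_ne_zero ha) (comp_top_ne_zero hb) h0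
    · rcases Nat.lt_or_ge a.totalDegree i with hi | hi
      · rw [homogeneousComponent_eq_zero _ _ hi, zero_mul]
      · have hk : b.totalDegree < k := by
          rcases Nat.lt_or_ge b.totalDegree k with hk | hk
          · exact hk
          · exfalso; exact h1 ⟨by omega, by omega⟩
        rw [homogeneousComponent_eq_zero _ _ hk, mul_zero]
  have hbot : bot a hsa + bot b hsb = e := by
    by_contra hne
    have h0 : homogeneousComponent (bot a hsa + bot b hsb) (a * b) = 0 := by
      rw [homogeneousComponent_of_mem ((mem_homogeneousSubmodule _ _).mpr h), if_neg hne]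
    rw [comp_mul_eq (bot_le_totalDegree hsa) (bot_le_totalDegree hsb)
      (fun i k hik h1 => ?_)] at h0
    · exact mul_ne_zero (comp_bot_ne_zero hsa) (comp_bot_ne_zero hsb) h0
    · rcases Nat.lt_or_ge i (bot a hsa) with hi | hi
      · rw [comp_eq_zero_of_lt_bot hsa hi, zero_mul]
      · have hk : k < bot b hsb := by
          rcases Nat.lt_or_ge k (bot b hsb) with hk | hk
          · exact hk
          · exfalso; exact h1 ⟨by omega, by omega⟩
        rw [comp_eq_zero_of_lt_bot hsb hk, mul_zero]
  have hba : bot a hsa = a.totalDegree := by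
    have := bot_le_totalDegree hsa
    have := bot_le_totalDegree hsb
    omega
  have hbb : bot b hsb = b.totalDegree := by
    have := bot_le_totalDegree hsa
    have := bot_le_totalDegree hsb
    omega
  have key : ∀ (c : MvPolynomial σ K) (hc : c.support.Nonempty),
      bot c hc = c.totalDegree → c.IsHomogeneous c.totalDegree := by
    intro c hc hbc
    have hcc : c = homogeneousComponent c.totalDegree c := by
      conv_lhs => rw [← c.sum_homogeneousComponent]
      rw [Finset.sum_eq_single_of_mem c.totalDegree
        (Finset.self_mem_range_succ c.totalDegree)]
      intro i hi hne
      have : i < c.totalDegree := lt_of_le_of_ne (Finset.mem_range_succ_iff.mp hi) hne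
      exact comp_eq_zero_of_lt_bot hc (hbc ▸ this)
    have := homogeneousComponent_isHomogeneous c.totalDegree c
    rwa [← hcc] at this
  exact ⟨key a hsa hba, key b hsb hbb, htop⟩


lemma eq_C_of_isHomogeneous_zero {p : MvPolynomial σ K} (h : p.IsHomogeneous 0) :
    p = C (coeff 0 p) := by
  classical
  ext d
  rcases eq_or_ne d 0 with rfl | hd
  · simp
  · rw [h.coeff_eq_zero (by simpa [Finsupp.degree_eq_zero_iff] using hd), coeff_C,
      if_neg (fun hc => hd hc.symm)]

lemma isUnit_of_isHomogeneous_zero {p : MvPolynomial σ K} (h : p.IsHomogeneous 0)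
    (hp : p ≠ 0) : IsUnit p := by
  rw [eq_C_of_isHomogeneous_zero h] at hp ⊢
  have hc : coeff 0 p ≠ 0 := fun hc => hp (by rw [hc, map_zero])
  exact (isUnit_iff_ne_zero.mpr hc).map (C : K →+* MvPolynomial σ K)

lemma prime_linear {y : MvPolynomial σ K} (hy : y.IsHomogeneous 1) (hy0 : y ≠ 0) :
    Prime y := by
  rw [← UniqueFactorizationMonoid.irreducible_iff_prime]
  constructor
  · intro hu
    obtain ⟨v, hv⟩ := isUnit_iff_exists_inv.mp hu
    have hv0 : v ≠ 0 := fun h => by simp [h] at hv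
    have h1 : (y * v).IsHomogeneous 0 := hv ▸ isHomogeneous_one σ K
    obtain ⟨h2, h3, h4⟩ := isHomogeneous_of_mul h1 hy0 hv0
    have := hy.totalDegree hy0
    omega
  · rintro a b rfl
    have ha : a ≠ 0 := fun h => hy0 (by rw [h, zero_mul])
    have hb : b ≠ 0 := fun h => hy0 (by rw [h, mul_zero])
    obtain ⟨h2, h3, h4⟩ := isHomogeneous_of_mul hy ha hb
    rcases Nat.eq_zero_or_pos a.totalDegree with h5 | h5
    · exact Or.inl (isUnit_of_isHomogeneous_zero (h5 ▸ h2) ha)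
    · refine Or.inr (isUnit_of_isHomogeneous_zero ?_ hb)
      have : b.totalDegree = 0 := by omega
      exact this ▸ h3

lemma span_eq_of_associated {y z : MvPolynomial σ K} (hy : y.IsHomogeneous 1)
    (hy0 : y ≠ 0) (hz : z.IsHomogeneous 1) (h : Associated y z) :
    Submodule.span K {y} = Submodule.span K {z} := by
  obtain ⟨u, hu⟩ := h
  have hu0 : (u : MvPolynomial σ K) ≠ 0 := u.ne_zero
  have h1 : (y * (u : MvPolynomial σ K)).IsHomogeneous 1 := by rw [hu]; exact hz
  obtain ⟨hyh, huh, hsum⟩ := isHomogeneous_of_mul h1 hy0 hu0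
  have hyd : y.totalDegree = 1 := hy.totalDegree hy0
  have hud : (u : MvPolynomial σ K).totalDegree = 0 := by omega
  have hC : (u : MvPolynomial σ K) = C (coeff 0 (u : MvPolynomial σ K)) :=
    eq_C_of_isHomogeneous_zero (hud ▸ huh)
  have hc0 : coeff 0 (u : MvPolynomial σ K) ≠ 0 := fun hc => hu0 (by rw [hC, hc, map_zero])
  have hzy : z = coeff 0 (u : MvPolynomial σ K) • y := by
    rw [smul_eq_C_mul, ← hC, mul_comm, hu]
  rw [hzy, Submodule.span_singleton_smul_eq (isUnit_iff_ne_zero.mpr hc0)]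


lemma prod_primes_dvd' {ι : Type*} (s : Finset ι) (f : ι → MvPolynomial σ K)
    (p : MvPolynomial σ K)
    (hprime : ∀ i ∈ s, Prime (f i))
    (hassoc : ∀ i ∈ s, ∀ k ∈ s, i ≠ k → ¬ Associated (f i) (f k))
    (hdvd : ∀ i ∈ s, f i ∣ p) : (∏ i ∈ s, f i) ∣ p := by
  classical
  induction s using Finset.cons_induction generalizing p with
  | empty => simp
  | cons a t hat ih =>
    rw [Finset.prod_cons]
    obtain ⟨k, rfl⟩ := hdvd a (Finset.mem_cons_self a t)
    refine mul_dvd_mul_left _ (ih k (fun i hi => hprime i (Finset.mem_cons_of_mem hi))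
      (fun i hi l hl hil => hassoc i (Finset.mem_cons_of_mem hi) l
        (Finset.mem_cons_of_mem hl) hil) (fun i hi => ?_))
    have hip : Prime (f i) := hprime i (Finset.mem_cons_of_mem hi)
    have hd : f i ∣ f a * k := hdvd i (Finset.mem_cons_of_mem hi)
    refine (hip.dvd_or_dvd hd).resolve_left (fun hia => ?_)
    exact hassoc i (Finset.mem_cons_of_mem hi) a (Finset.mem_cons_self a t)
      (fun h => hat (h ▸ hi))
      (hip.associated_of_dvd (hprime a (Finset.mem_cons_self a t)) hia)

lemma mem_mul_span_iff {m : MvPolynomial σ K} {a e : ℕ} (hm : m.IsHomogeneous a)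
    (hm0 : m ≠ 0) (p : MvPolynomial σ K) :
    p ∈ homogeneousSubmodule σ K e * Submodule.span K {m} ↔
      p.IsHomogeneous (e + a) ∧ m ∣ p := by
  constructor
  · intro hp
    obtain ⟨z, hz, rfl⟩ := Submodule.mem_mul_span_singleton.mp hp
    exact ⟨((mem_homogeneousSubmodule _ _).mp hz).mul hm, Dvd.intro_left z rfl⟩
  · rintro ⟨hph, q, rfl⟩
    by_cases hq : q = 0
    · subst hq
      rw [mul_zero]
      exact Submodule.zero_mem _
    · obtain ⟨hmh, hqh, hsum⟩ := isHomogeneous_of_mul hph hm0 hq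
      have hma : m.totalDegree = a := hm.totalDegree hm0
      have hqe : q.totalDegree = e := by omega
      exact Submodule.mem_mul_span_singleton.mpr
        ⟨q, (mem_homogeneousSubmodule _ _).mpr (hqe ▸ hqh), mul_comm q m⟩


lemma finsupp_degree_eq_card {α : Type*} (f : α →₀ ℕ) :
    f.degree = Multiset.card (Finsupp.toMultiset f) := by
  rw [Finsupp.card_toMultiset]; rfl

/-- monomials of degree `e` in `n` variables correspond to multisets of size `e`. -/
noncomputable def degreeEquivSym (n e : ℕ) :
    {d : Fin n →₀ ℕ // d.degree = e} ≃ Sym (Fin n) e where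
  toFun d := ⟨Finsupp.toMultiset d.1, by rw [← finsupp_degree_eq_card]; exact d.2⟩
  invFun m := ⟨Multiset.toFinsupp m.1, by
    rw [finsupp_degree_eq_card, Multiset.toFinsupp_toMultiset]; exact m.2⟩
  left_inv d := Subtype.ext (Finsupp.toMultiset_toFinsupp d.1)
  right_inv m := Subtype.ext (Multiset.toFinsupp_toMultiset m.1)

lemma finrank_homogeneousSubmodule (n e : ℕ) :
    Module.finrank K (homogeneousSubmodule (Fin n) K e) = Nat.multichoose n e := by
  haveI : Fintype ({d : Fin n →₀ ℕ | d.degree = e} : Set (Fin n →₀ ℕ)) :=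
    Fintype.ofEquiv _ (degreeEquivSym n e).symm
  have hsub : homogeneousSubmodule (Fin n) K e =
      restrictSupport K {d : Fin n →₀ ℕ | d.degree = e} :=
    homogeneousSubmodule_eq_finsupp_supported (Fin n) K e
  rw [hsub]
  rw [Module.finrank_eq_card_basis (basisRestrictSupport K {d : Fin n →₀ ℕ | d.degree = e})]
  have hcard : Fintype.card ({d : Fin n →₀ ℕ | d.degree = e} : Set (Fin n →₀ ℕ)) =
      Fintype.card (Sym (Fin n) e) := Fintype.card_congr (degreeEquivSym n e)
  rw [hcard, Sym.card_sym_eq_multichoose, Fintype.card_fin]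


lemma map_mulLeft_eq (m : MvPolynomial σ K) (e : ℕ) :
    Submodule.map (LinearMap.mulLeft K m) (homogeneousSubmodule σ K e) =
      homogeneousSubmodule σ K e * Submodule.span K {m} := by
  ext p
  rw [Submodule.mem_map, Submodule.mem_mul_span_singleton]
  constructor
  · rintro ⟨z, hz, rfl⟩
    exact ⟨z, hz, mul_comm z m⟩
  · rintro ⟨z, hz, rfl⟩
    exact ⟨z, hz, mul_comm m z⟩

lemma finrank_mul_span (m : MvPolynomial σ K) (hm0 : m ≠ 0) (e : ℕ) :
    Module.finrank K (homogeneousSubmodule σ K e * Submodule.span K {m} :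
      Submodule K (MvPolynomial σ K)) = Module.finrank K (homogeneousSubmodule σ K e) := by
  rw [← map_mulLeft_eq]
  exact (LinearEquiv.finrank_eq (Submodule.equivMapOfInjective _
    (mul_right_injective₀ hm0) _)).symm

end DualArcAux

/-- For the family `𝒟 = {A_{d-1}y : 0 ≠ y ∈ A_1}` of subspaces of `A_d`:
the intersection of the members attached to `j ≤ d` nonzero linear forms
`y_1, …, y_j` spanning pairwise distinct 1-spaces equals
`A_{d-j}·(y_1⋯y_j)`, which has dimension `(n+d-j-1).choose (d-j)`; moreover
the intersection of any `d+1` distinct members of `𝒟` is `0`.  Hence `𝒟` is a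
generalized dual arc of `A_d` with vector dimensions
`((n+d-1).choose d, (n+d-2).choose (d-1), …, n, 1)`. -/
theorem generalized_dual_arc_polynomials (K : Type*) [Field K] (n d j : ℕ)
    (hn : 1 < n) (hd : 2 ≤ d) (hj1 : 1 ≤ j) (hjd : j ≤ d)
    (y : Fin j → MvPolynomial (Fin n) K)
    (hy : ∀ i, y i ∈ homogeneousSubmodule (Fin n) K 1)
    (hy0 : ∀ i, y i ≠ 0)
    (hyd : ∀ i k, i ≠ k → Submodule.span K {y i} ≠ Submodule.span K {y k}) :
    ((⨅ i, homogeneousSubmodule (Fin n) K (d - 1) * Submodule.span K {y i}) =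
      homogeneousSubmodule (Fin n) K (d - j) * Submodule.span K {∏ i, y i}) ∧
    (Module.finrank K
        (homogeneousSubmodule (Fin n) K (d - j) * Submodule.span K {∏ i, y i} :
          Submodule K (MvPolynomial (Fin n) K)) =
      (n + d - j - 1).choose (d - j)) ∧
    (∀ z : Fin (d + 1) → MvPolynomial (Fin n) K,
      (∀ i, z i ∈ homogeneousSubmodule (Fin n) K 1) → (∀ i, z i ≠ 0) →
      (∀ i k, i ≠ k → Submodule.span K {z i} ≠ Submodule.span K {z k}) →
      (⨅ i, homogeneousSubmodule (Fin n) K (d - 1) * Submodule.span K {z i}) =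
        ⊥) := by
  have hd1 : d - 1 + 1 = d := by omega
  have hdj : d - j + j = d := by omega
  have hprod0 : (∏ i, y i) ≠ 0 := Finset.prod_ne_zero_iff.mpr (fun i _ => hy0 i)
  have hprodh : (∏ i, y i).IsHomogeneous j := by
    have := IsHomogeneous.prod Finset.univ y (fun _ => 1)
      (fun i _ => (mem_homogeneousSubmodule _ _).mp (hy i))
    simpa using this
  refine ⟨?_, ?_, ?_⟩
  · ext p
    simp only [Submodule.mem_iInf]
    rw [DualArcAux.mem_mul_span_iff hprodh hprod0 p, hdj]
    have hmem : ∀ i, p ∈ homogeneousSubmodule (Fin n) K (d - 1) * Submodule.span K {y i} ↔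
        p.IsHomogeneous d ∧ y i ∣ p := by
      intro i
      rw [DualArcAux.mem_mul_span_iff ((mem_homogeneousSubmodule _ _).mp (hy i)) (hy0 i) p, hd1]
    constructor
    · intro h
      have h' : ∀ i, p.IsHomogeneous d ∧ y i ∣ p := fun i => (hmem i).mp (h i)
      refine ⟨(h' ⟨0, hj1⟩).1, ?_⟩
      refine DualArcAux.prod_primes_dvd' Finset.univ y p
        (fun i _ => DualArcAux.prime_linear ((mem_homogeneousSubmodule _ _).mp (hy i)) (hy0 i))
        (fun i _ k _ hik hass => hyd i k hik
          (DualArcAux.span_eq_of_associated ((mem_homogeneousSubmodule _ _).mp (hy i)) (hy0 i)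
            ((mem_homogeneousSubmodule _ _).mp (hy k)) hass))
        (fun i _ => (h' i).2)
    · rintro ⟨hph, hdvd⟩ i
      exact (hmem i).mpr ⟨hph, dvd_trans (Finset.dvd_prod_of_mem y (Finset.mem_univ i)) hdvd⟩
  · rw [DualArcAux.finrank_mul_span _ hprod0, DualArcAux.finrank_homogeneousSubmodule,
      Nat.multichoose_eq]
    congr 1
    omega
  · intro z hz hz0 hzd
    rw [eq_bot_iff]
    intro p hp
    simp only [Submodule.mem_iInf] at hp
    rw [Submodule.mem_bot]
    by_contra hp0
    have h' : ∀ i, p.IsHomogeneous d ∧ z i ∣ p := by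
      intro i
      have := (DualArcAux.mem_mul_span_iff ((mem_homogeneousSubmodule _ _).mp (hz i)) (hz0 i)
        p).mp (hp i)
      rwa [hd1] at this
    have hzprod : (∏ i, z i) ∣ p :=
      DualArcAux.prod_primes_dvd' Finset.univ z p
        (fun i _ => DualArcAux.prime_linear ((mem_homogeneousSubmodule _ _).mp (hz i)) (hz0 i))
        (fun i _ k _ hik hass => hzd i k hik
          (DualArcAux.span_eq_of_associated ((mem_homogeneousSubmodule _ _).mp (hz i)) (hz0 i)
            ((mem_homogeneousSubmodule _ _).mp (hz k)) hass))
        (fun i _ => (h' i).2)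
    have hzp0 : (∏ i, z i) ≠ 0 := Finset.prod_ne_zero_iff.mpr (fun i _ => hz0 i)
    have hzph : (∏ i, z i).IsHomogeneous (d + 1) := by
      have := IsHomogeneous.prod Finset.univ z (fun _ => 1)
        (fun i _ => (mem_homogeneousSubmodule _ _).mp (hz i))
      simpa using this
    obtain ⟨q, hq⟩ := hzprod
    have hq0 : q ≠ 0 := fun h => hp0 (by rw [hq, h, mul_zero])
    have hph : ((∏ i, z i) * q).IsHomogeneous d := hq ▸ (h' ⟨0, by omega⟩).1
    obtain ⟨h1, h2, h3⟩ := DualArcAux.isHomogeneous_of_mul hph hzp0 hq0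
    have := hzph.totalDegree hzp0
    omega
end

section
/- Let K be a field, A = K[x_1,…,x_n] with dim_K A_1 = n = 2k for an integer k ≥ 1, and let 𝒮 be a partial spread of k-dimensional subspaces of A_1 (a set of k-subspaces pairwise intersecting in 0). Then: (1) for every H ∈ 𝒮, dim ⟨A_1 H⟩ = k(3k+1)/2; (2) for any two distinct H_1, H_2 ∈ 𝒮, ⟨A_1 H_1⟩ ∩ ⟨A_1 H_2⟩ = ⟨H_1 H_2⟩, which has dimension k²; and (3) for any three distinct H_1, H_2, H_3 ∈ 𝒮, dim(⟨A_1 H_1⟩ ∩ ⟨A_1 H_2⟩ ∩ ⟨A_1 H_3⟩) = binom(k, 2). -/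
/-!
If `v` is a linearly independent family in `A_1`, the linear map sending `v i` to the variable
`X i` of a new polynomial ring extends to an algebra map, so the products `v a * v b` over
unordered pairs `{a, b}` are linearly independent. For disjoint `H₁, H₂ ⊆ A_1` this splits
`H₁H₁ + H₁H₂ + H₂H₂` into a direct sum of spaces of dimensions `C(dim H₁ + 1, 2)`,
`dim H₁ · dim H₂` and `C(dim H₂ + 1, 2)`. When `H₁ ⊕ H₂ = A_1` we have
`⟨A_1H₁⟩ = H₁H₁ ⊕ H₁H₂`, which gives (1), and the modular law gives (2). For (3) the triple
intersection is `H₁H₂ ∩ ⟨A_1H₃⟩`, and `H₁H₂ + ⟨A_1H₃⟩ = ⟨A_1A_1⟩` because `H₃` is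
complementary to both `H₁` and `H₂`; comparing dimensions gives `k² + (C(k+1,2) + k²) - C(2k+1,2)`.
-/

open MvPolynomial Submodule Module

section LinearAlgebra

variable {K V : Type*} [Field K] [AddCommGroup V] [Module K V]

theorem LinearIndependent.exists_linearMap_apply_eq {W ι : Type*} [AddCommGroup W] [Module K W]
    {v : ι → V} (hv : LinearIndependent K v) (w : ι → W) :
    ∃ f : V →ₗ[K] W, ∀ i, f (v i) = w i := by
  obtain ⟨f, hf⟩ := LinearMap.exists_extend (Finsupp.linearCombination K w ∘ₗ hv.repr)
  refine ⟨f, fun i => ?_⟩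
  have := LinearMap.congr_fun hf ⟨v i, subset_span (Set.mem_range_self i)⟩
  simpa [hv.repr_eq_single i] using this

theorem Submodule.exists_linearIndependent_span_eq (H : Submodule K V) [FiniteDimensional K H] :
    ∃ u : Fin (finrank K H) → V, LinearIndependent K u ∧ span K (Set.range u) = H := by
  let b := finBasis K H
  refine ⟨H.subtype ∘ b, b.linearIndependent.map' H.subtype H.ker_subtype, ?_⟩
  rw [Set.range_comp, span_image, b.span_eq, map_top, range_subtype]

theorem Submodule.exists_linearIndependent_sumElim_of_disjoint {H₁ H₂ : Submodule K V}
    [FiniteDimensional K H₁] [FiniteDimensional K H₂] (hd : Disjoint H₁ H₂) :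
    ∃ (u : Fin (finrank K H₁) → V) (w : Fin (finrank K H₂) → V),
      LinearIndependent K (Sum.elim u w) ∧ span K (Set.range u) = H₁ ∧
        span K (Set.range w) = H₂ := by
  obtain ⟨u, hu, hu₁⟩ := H₁.exists_linearIndependent_span_eq
  obtain ⟨w, hw, hw₂⟩ := H₂.exists_linearIndependent_span_eq
  refine ⟨u, w, hu.sum_type hw ?_, hu₁, hw₂⟩
  rwa [hu₁, hw₂]

theorem Submodule.sup_eq_of_disjoint_of_finrank_add_eq {H₁ H₂ W : Submodule K V}
    [FiniteDimensional K W] (h₁ : H₁ ≤ W) (h₂ : H₂ ≤ W) (hd : Disjoint H₁ H₂)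
    (hW : finrank K H₁ + finrank K H₂ = finrank K W) : H₁ ⊔ H₂ = W := by
  have := finiteDimensional_of_le h₁
  have := finiteDimensional_of_le h₂
  refine eq_of_le_of_finrank_eq (sup_le h₁ h₂) ?_
  have := finrank_sup_add_finrank_inf_eq H₁ H₂
  rw [hd.eq_bot, finrank_bot] at this
  omega

end LinearAlgebra

instance Submodule.finiteDimensional_mul {K A : Type*} [Field K] [Ring A] [Algebra K A]
    (M N : Submodule K A) [FiniteDimensional K M] [FiniteDimensional K N] :
    FiniteDimensional K ↥(M * N) :=
  Module.Finite.iff_fg.2 ((Module.Finite.iff_fg.1 ‹_›).mul (Module.Finite.iff_fg.1 ‹_›))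

def sym2Mul {R ι : Type*} [CommMagma R] (v : ι → R) : Sym2 ι → R :=
  Sym2.lift ⟨fun a b => v a * v b, fun _ _ => mul_comm _ _⟩

@[simp]
theorem sym2Mul_mk {R ι : Type*} [CommMagma R] (v : ι → R) (a b : ι) :
    sym2Mul v s(a, b) = v a * v b := rfl

theorem sym2Mul_comp_map {R ι κ : Type*} [CommMagma R] (v : κ → R) (e : ι → κ) :
    sym2Mul v ∘ Sym2.map e = sym2Mul (v ∘ e) := by
  ext z; induction z using Sym2.ind; rfl

section CommAlgebra

variable {K A : Type*} [CommSemiring K] [CommSemiring A] [Algebra K A]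

theorem span_range_sym2Mul {ι : Type*} (v : ι → A) :
    span K (Set.range (sym2Mul v)) = span K (Set.range v) * span K (Set.range v) := by
  rw [span_mul_span]
  congr 1
  ext x
  constructor
  · rintro ⟨z, rfl⟩
    induction z using Sym2.ind with
    | _ a b => exact Set.mul_mem_mul ⟨a, rfl⟩ ⟨b, rfl⟩
  · rintro ⟨_, ⟨a, rfl⟩, _, ⟨b, rfl⟩, rfl⟩
    exact ⟨s(a, b), rfl⟩

theorem span_range_mul {ι κ : Type*} (u : ι → A) (w : κ → A) :
    span K (Set.range fun p : ι × κ => u p.1 * w p.2) =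
      span K (Set.range u) * span K (Set.range w) := by
  rw [span_mul_span, ← Set.image2_mul, ← Set.image2_range]

theorem Submodule.mul_sup_mul_eq_mul_self {H₁ H₂ H₃ V : Submodule K A} (h₁ : H₃ ⊔ H₁ = V)
    (h₂ : H₃ ⊔ H₂ = V) : H₁ * H₂ ⊔ V * H₃ = V * V := by
  refine le_antisymm (sup_le (mul_le_mul' (h₁ ▸ le_sup_right) (h₂ ▸ le_sup_right))
    (mul_le_mul' le_rfl (h₁ ▸ le_sup_left))) ?_
  calc V * V = V * H₃ ⊔ (H₃ * H₂ ⊔ H₁ * H₂) := by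
        nth_rewrite 2 [← h₂]
        rw [Submodule.mul_sup]
        nth_rewrite 2 [← h₁]
        rw [Submodule.sup_mul]
    _ ≤ H₁ * H₂ ⊔ V * H₃ := by
        rw [Submodule.mul_comm H₃ H₂, ← sup_assoc, sup_comm]
        exact sup_le_sup_left (sup_le le_rfl (mul_le_mul' (h₂ ▸ le_sup_right) le_rfl)) _

end CommAlgebra

namespace MvPolynomial

variable {σ K : Type*} [Field K]

instance [Finite σ] (n : ℕ) : FiniteDimensional K (homogeneousSubmodule σ K n) :=
  Module.Finite.iff_fg.2 (homogeneousSubmodule_fg σ K n)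

theorem finrank_homogeneousSubmodule_one [Fintype σ] :
    finrank K (homogeneousSubmodule σ K 1) = Fintype.card σ := by
  rw [homogeneousSubmodule_one_eq_span_X, finrank_span_eq_card (linearIndependent_X σ K)]

theorem linearIndependent_sym2Mul_X (ι : Type*) :
    LinearIndependent K (sym2Mul (X : ι → MvPolynomial ι K)) := by
  let exponent : Sym2 ι → ι →₀ ℕ :=
    Sym2.lift ⟨fun a b => Finsupp.single a 1 + Finsupp.single b 1, fun _ _ => add_comm _ _⟩
  have : sym2Mul (X : ι → MvPolynomial ι K) = (fun d => monomial d (1 : K)) ∘ exponent := by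
    ext z; induction z using Sym2.ind; simp [exponent, X, monomial_mul]
  rw [this]
  refine (basisMonomials ι K).linearIndependent.comp _ fun z z' h => ?_
  induction z using Sym2.ind
  induction z' using Sym2.ind
  simpa [exponent, Finsupp.single_add_single_eq_single_add_single, Sym2.eq_iff] using h

theorem exists_algHom_apply_eq_X {ι : Type*} {v : ι → MvPolynomial σ K}
    (hv : LinearIndependent K v) (h1 : ∀ i, v i ∈ homogeneousSubmodule σ K 1) :
    ∃ g : MvPolynomial σ K →ₐ[K] MvPolynomial ι K, ∀ i, g (v i) = X i := by
  obtain ⟨f, hf⟩ := hv.exists_linearMap_apply_eq (X : ι → MvPolynomial ι K)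
  refine ⟨aeval fun j => f (X j), fun i => ?_⟩
  have hX : Set.EqOn (aeval fun j => f (X j)).toLinearMap f (Set.range X) := by
    rintro _ ⟨j, rfl⟩; simp
  rw [← hf i]
  exact LinearMap.eqOn_span hX (homogeneousSubmodule_one_eq_span_X (R := K) ▸ h1 i)

theorem linearIndependent_sym2Mul {ι : Type*} {v : ι → MvPolynomial σ K}
    (hv : LinearIndependent K v) (h1 : ∀ i, v i ∈ homogeneousSubmodule σ K 1) :
    LinearIndependent K (sym2Mul v) := by
  obtain ⟨g, hg⟩ := exists_algHom_apply_eq_X hv h1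
  refine .of_comp g.toLinearMap ?_
  have : g.toLinearMap ∘ sym2Mul v = sym2Mul X := by
    ext z; induction z using Sym2.ind; simp [hg]
  rw [this]
  exact linearIndependent_sym2Mul_X ι

section SumElim

variable {ι κ : Type*} {u : ι → MvPolynomial σ K} {w : κ → MvPolynomial σ K}

theorem linearIndependent_mul_of_sumElim (hv : LinearIndependent K (Sum.elim u w))
    (h1 : ∀ x, Sum.elim u w x ∈ homogeneousSubmodule σ K 1) :
    LinearIndependent K fun p : ι × κ => u p.1 * w p.2 := by
  have hinj : Function.Injective fun p : ι × κ => s(Sum.inl p.1, Sum.inr p.2) := by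
    rintro ⟨a, b⟩ ⟨c, d⟩ h
    simp only [Sym2.eq_iff, Sum.inl.injEq, Sum.inr.injEq, reduceCtorEq, and_false,
      or_false] at h
    rw [h.1, h.2]
  have hcomp : (fun p : ι × κ => u p.1 * w p.2) =
      sym2Mul (Sum.elim u w) ∘ fun p => s(Sum.inl p.1, Sum.inr p.2) := by
    ext p; simp
  rw [hcomp]
  exact (linearIndependent_sym2Mul hv h1).comp _ hinj

theorem disjoint_span_sym2Mul_of_sumElim (hv : LinearIndependent K (Sum.elim u w))
    (h1 : ∀ x, Sum.elim u w x ∈ homogeneousSubmodule σ K 1) :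
    Disjoint (span K (Set.range (sym2Mul u)))
      (span K (Set.range fun p : ι × κ => u p.1 * w p.2) ⊔ span K (Set.range (sym2Mul w))) := by
  have hdisj : Disjoint (Set.range (Sym2.map Sum.inl))
      (Set.range (fun p : ι × κ => s(Sum.inl p.1, Sum.inr p.2)) ∪
        Set.range (Sym2.map Sum.inr)) := by
    rw [Set.disjoint_left]
    rintro _ ⟨z, rfl⟩ (⟨p, hp⟩ | ⟨z', hz'⟩) <;> induction z using Sym2.ind
    · simp at hp
    · induction z' using Sym2.ind
      simp at hz'
  have := (linearIndependent_sym2Mul hv h1).disjoint_span_image hdisj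
  rwa [Set.image_union, span_union, ← Set.range_comp, ← Set.range_comp, ← Set.range_comp,
    sym2Mul_comp_map, sym2Mul_comp_map] at this

end SumElim

variable {H H₁ H₂ : Submodule K (MvPolynomial σ K)}

theorem finrank_mul_self (hH : H ≤ homogeneousSubmodule σ K 1) [FiniteDimensional K H] :
    finrank K ↥(H * H) = (finrank K H + 1).choose 2 := by
  obtain ⟨u, hu, hspan⟩ := H.exists_linearIndependent_span_eq
  have h1 : ∀ i, u i ∈ homogeneousSubmodule σ K 1 :=
    fun i => hH (hspan.le (subset_span ⟨i, rfl⟩))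
  calc finrank K ↥(H * H) = finrank K (span K (Set.range (sym2Mul u))) := by
        rw [span_range_sym2Mul, hspan]
    _ = (finrank K H + 1).choose 2 := by
        rw [finrank_span_eq_card (linearIndependent_sym2Mul hu h1), Sym2.card, Fintype.card_fin]

theorem finrank_mul_of_disjoint (h₁ : H₁ ≤ homogeneousSubmodule σ K 1)
    (h₂ : H₂ ≤ homogeneousSubmodule σ K 1) [FiniteDimensional K H₁] [FiniteDimensional K H₂]
    (hd : Disjoint H₁ H₂) : finrank K ↥(H₁ * H₂) = finrank K H₁ * finrank K H₂ := by
  obtain ⟨u, w, hv, hu₁, hw₂⟩ := exists_linearIndependent_sumElim_of_disjoint hd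
  have h1 : ∀ x, Sum.elim u w x ∈ homogeneousSubmodule σ K 1 := Sum.forall.2
    ⟨fun i => h₁ (hu₁.le (subset_span ⟨i, rfl⟩)), fun j => h₂ (hw₂.le (subset_span ⟨j, rfl⟩))⟩
  calc finrank K ↥(H₁ * H₂) = finrank K (span K (Set.range fun p : _ × _ => u p.1 * w p.2)) := by
        rw [span_range_mul, hu₁, hw₂]
    _ = finrank K H₁ * finrank K H₂ := by
        rw [finrank_span_eq_card (linearIndependent_mul_of_sumElim hv h1), Fintype.card_prod,
          Fintype.card_fin, Fintype.card_fin]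

theorem disjoint_mul_self_mul_sup_mul_self (h₁ : H₁ ≤ homogeneousSubmodule σ K 1)
    (h₂ : H₂ ≤ homogeneousSubmodule σ K 1) [FiniteDimensional K H₁] [FiniteDimensional K H₂]
    (hd : Disjoint H₁ H₂) : Disjoint (H₁ * H₁) (H₁ * H₂ ⊔ H₂ * H₂) := by
  obtain ⟨u, w, hv, hu₁, hw₂⟩ := exists_linearIndependent_sumElim_of_disjoint hd
  have h1 : ∀ x, Sum.elim u w x ∈ homogeneousSubmodule σ K 1 := Sum.forall.2
    ⟨fun i => h₁ (hu₁.le (subset_span ⟨i, rfl⟩)), fun j => h₂ (hw₂.le (subset_span ⟨j, rfl⟩))⟩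
  have := disjoint_span_sym2Mul_of_sumElim hv h1
  rwa [span_range_sym2Mul, span_range_sym2Mul, span_range_mul, hu₁, hw₂] at this

theorem sup_mul_inf_sup_mul (h₁ : H₁ ≤ homogeneousSubmodule σ K 1)
    (h₂ : H₂ ≤ homogeneousSubmodule σ K 1) [FiniteDimensional K H₁] [FiniteDimensional K H₂]
    (hd : Disjoint H₁ H₂) : (H₁ ⊔ H₂) * H₁ ⊓ (H₁ ⊔ H₂) * H₂ = H₁ * H₂ := by
  rw [Submodule.sup_mul, Submodule.sup_mul, Submodule.mul_comm H₂ H₁, sup_comm,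
    sup_inf_assoc_of_le _ le_sup_left, (disjoint_mul_self_mul_sup_mul_self h₁ h₂ hd).eq_bot,
    sup_bot_eq]

theorem finrank_homogeneousSubmodule_one_mul [Fintype σ] (hH : H ≤ homogeneousSubmodule σ K 1) :
    finrank K ↥(homogeneousSubmodule σ K 1 * H) =
      (finrank K H + 1).choose 2 + finrank K H * (Fintype.card σ - finrank K H) := by
  have := finiteDimensional_of_le hH
  obtain ⟨W, hd, hsup⟩ := IsModularLattice.exists_disjoint_and_sup_eq hH
  have hW : W ≤ homogeneousSubmodule σ K 1 := hsup ▸ le_sup_right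
  have := finiteDimensional_of_le hW
  have hdimW : finrank K W = Fintype.card σ - finrank K H := by
    have := finrank_sup_add_finrank_inf_eq H W
    rw [hsup, hd.eq_bot, finrank_bot, finrank_homogeneousSubmodule_one] at this
    omega
  have := finrank_sup_add_finrank_inf_eq (H * H) (H * W)
  rw [(disjoint_mul_self_mul_sup_mul_self hH hW hd).mono_right le_sup_left |>.eq_bot,
    finrank_bot, finrank_mul_self hH, finrank_mul_of_disjoint hH hW hd, hdimW] at this
  rw [← hsup, Submodule.sup_mul, Submodule.mul_comm W H]
  omega

end MvPolynomial

theorem Nat.succ_choose_two_add_mul_self (k : ℕ) :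
    (k + 1).choose 2 + k * k = k * (3 * k + 1) / 2 := by
  refine (Nat.div_eq_of_eq_mul_left two_pos ?_).symm
  have : ((k + 1).choose 2 : ℚ) = (k + 1) * k / 2 := by
    rw [Nat.cast_choose_two]; push_cast; ring
  exact_mod_cast (by rw [this]; ring : (k : ℚ) * (3 * k + 1) = ((k + 1).choose 2 + k * k) * 2)

theorem Nat.two_mul_succ_choose_two_add_choose_two (k : ℕ) :
    (2 * k + 1).choose 2 + k.choose 2 = k ^ 2 + ((k + 1).choose 2 + k * k) := by
  have : ((2 * k + 1).choose 2 + k.choose 2 : ℚ) = k ^ 2 + ((k + 1).choose 2 + k * k) := by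
    simp only [Nat.cast_choose_two]; push_cast; ring
  exact_mod_cast this

theorem partial_spread_intersections_general (K : Type*) [Field K] (k : ℕ)
    (𝒮 : Set (Submodule K (MvPolynomial (Fin (2 * k)) K)))
    (h𝒮 : ∀ H ∈ 𝒮, H ≤ homogeneousSubmodule (Fin (2 * k)) K 1)
    (hdim : ∀ H ∈ 𝒮, Module.finrank K H = k)
    (hspread : ∀ H₁ ∈ 𝒮, ∀ H₂ ∈ 𝒮, H₁ ≠ H₂ → H₁ ⊓ H₂ = ⊥) :
    (∀ H ∈ 𝒮,
      Module.finrank K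
          (homogeneousSubmodule (Fin (2 * k)) K 1 * H :
            Submodule K (MvPolynomial (Fin (2 * k)) K)) =
        k * (3 * k + 1) / 2) ∧
    (∀ H₁ ∈ 𝒮, ∀ H₂ ∈ 𝒮, H₁ ≠ H₂ →
      (homogeneousSubmodule (Fin (2 * k)) K 1 * H₁) ⊓
          (homogeneousSubmodule (Fin (2 * k)) K 1 * H₂) = H₁ * H₂ ∧
      Module.finrank K
          (H₁ * H₂ : Submodule K (MvPolynomial (Fin (2 * k)) K)) = k ^ 2) ∧
    (∀ H₁ ∈ 𝒮, ∀ H₂ ∈ 𝒮, ∀ H₃ ∈ 𝒮, H₁ ≠ H₂ → H₁ ≠ H₃ → H₂ ≠ H₃ →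
      Module.finrank K
          ((homogeneousSubmodule (Fin (2 * k)) K 1 * H₁) ⊓
            (homogeneousSubmodule (Fin (2 * k)) K 1 * H₂) ⊓
            (homogeneousSubmodule (Fin (2 * k)) K 1 * H₃) :
            Submodule K (MvPolynomial (Fin (2 * k)) K)) =
        k.choose 2) := by
  set A₁ := homogeneousSubmodule (Fin (2 * k)) K 1
  have hA₁ : finrank K A₁ = 2 * k := by rw [finrank_homogeneousSubmodule_one, Fintype.card_fin]
  have finrank_mul : ∀ H ∈ 𝒮, finrank K ↥(A₁ * H) = (k + 1).choose 2 + k * k := fun H hH => by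
    rw [finrank_homogeneousSubmodule_one_mul (h𝒮 H hH), hdim H hH, Fintype.card_fin, two_mul,
      Nat.add_sub_cancel]
  have disjoint : ∀ H₁ ∈ 𝒮, ∀ H₂ ∈ 𝒮, H₁ ≠ H₂ → Disjoint H₁ H₂ :=
    fun H₁ h₁ H₂ h₂ hne => disjoint_iff.2 (hspread H₁ h₁ H₂ h₂ hne)
  have sup_eq : ∀ H₁ ∈ 𝒮, ∀ H₂ ∈ 𝒮, H₁ ≠ H₂ → H₁ ⊔ H₂ = A₁ := fun H₁ h₁ H₂ h₂ hne =>
    sup_eq_of_disjoint_of_finrank_add_eq (h𝒮 H₁ h₁) (h𝒮 H₂ h₂) (disjoint H₁ h₁ H₂ h₂ hne)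
      (by rw [hdim H₁ h₁, hdim H₂ h₂, hA₁, two_mul])
  have pair : ∀ H₁ ∈ 𝒮, ∀ H₂ ∈ 𝒮, H₁ ≠ H₂ →
      A₁ * H₁ ⊓ A₁ * H₂ = H₁ * H₂ ∧ finrank K ↥(H₁ * H₂) = k ^ 2 := by
    intro H₁ h₁ H₂ h₂ hne
    have := finiteDimensional_of_le (h𝒮 H₁ h₁)
    have := finiteDimensional_of_le (h𝒮 H₂ h₂)
    have hd := disjoint H₁ h₁ H₂ h₂ hne
    rw [← sup_eq H₁ h₁ H₂ h₂ hne, sup_mul_inf_sup_mul (h𝒮 H₁ h₁) (h𝒮 H₂ h₂) hd,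
      finrank_mul_of_disjoint (h𝒮 H₁ h₁) (h𝒮 H₂ h₂) hd, hdim H₁ h₁, hdim H₂ h₂, sq]
    exact ⟨rfl, rfl⟩
  refine ⟨fun H hH => (finrank_mul H hH).trans (Nat.succ_choose_two_add_mul_self k), pair, ?_⟩
  intro H₁ h₁ H₂ h₂ H₃ h₃ h₁₂ h₁₃ h₂₃
  have := finiteDimensional_of_le (mul_le_mul' (h𝒮 H₁ h₁) (h𝒮 H₂ h₂))
  have := finiteDimensional_of_le (mul_le_mul' (le_refl A₁) (h𝒮 H₃ h₃))
  have hsum := finrank_sup_add_finrank_inf_eq (H₁ * H₂) (A₁ * H₃)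
  rw [mul_sup_mul_eq_mul_self (sup_eq H₃ h₃ H₁ h₁ h₁₃.symm) (sup_eq H₃ h₃ H₂ h₂ h₂₃.symm),
    finrank_mul_self le_rfl, hA₁, (pair H₁ h₁ H₂ h₂ h₁₂).2, finrank_mul H₃ h₃] at hsum
  rw [(pair H₁ h₁ H₂ h₂ h₁₂).1]
  have := Nat.two_mul_succ_choose_two_add_choose_two k
  omega

/-- Let `𝒮` be a partial spread of `k`-subspaces of `A_1`, where
`dim A_1 = 2k`.  Then: (1) `dim ⟨A_1H⟩ = k(3k+1)/2` for `H ∈ 𝒮`;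
(2) `⟨A_1H_1⟩ ∩ ⟨A_1H_2⟩ = ⟨H_1H_2⟩` has dimension `k²` for distinct
`H_1, H_2 ∈ 𝒮`; and (3) the intersection of `⟨A_1H_i⟩` over three distinct
members has dimension `k.choose 2`. -/
theorem partial_spread_intersections (K : Type*) [Field K] (k : ℕ)
    (hk : 1 ≤ k)
    (𝒮 : Set (Submodule K (MvPolynomial (Fin (2 * k)) K)))
    (h𝒮 : ∀ H ∈ 𝒮, H ≤ homogeneousSubmodule (Fin (2 * k)) K 1)
    (hdim : ∀ H ∈ 𝒮, Module.finrank K H = k)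
    (hspread : ∀ H₁ ∈ 𝒮, ∀ H₂ ∈ 𝒮, H₁ ≠ H₂ → H₁ ⊓ H₂ = ⊥) :
    (∀ H ∈ 𝒮,
      Module.finrank K
          (homogeneousSubmodule (Fin (2 * k)) K 1 * H :
            Submodule K (MvPolynomial (Fin (2 * k)) K)) =
        k * (3 * k + 1) / 2) ∧
    (∀ H₁ ∈ 𝒮, ∀ H₂ ∈ 𝒮, H₁ ≠ H₂ →
      (homogeneousSubmodule (Fin (2 * k)) K 1 * H₁) ⊓
          (homogeneousSubmodule (Fin (2 * k)) K 1 * H₂) = H₁ * H₂ ∧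
      Module.finrank K
          (H₁ * H₂ : Submodule K (MvPolynomial (Fin (2 * k)) K)) = k ^ 2) ∧
    (∀ H₁ ∈ 𝒮, ∀ H₂ ∈ 𝒮, ∀ H₃ ∈ 𝒮, H₁ ≠ H₂ → H₁ ≠ H₃ → H₂ ≠ H₃ →
      Module.finrank K
          ((homogeneousSubmodule (Fin (2 * k)) K 1 * H₁) ⊓
            (homogeneousSubmodule (Fin (2 * k)) K 1 * H₂) ⊓
            (homogeneousSubmodule (Fin (2 * k)) K 1 * H₃) :
            Submodule K (MvPolynomial (Fin (2 * k)) K)) =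
        k.choose 2) :=
  partial_spread_intersections_general K k 𝒮 h𝒮 hdim hspread
end
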